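/- arXiv:1809.04362 — 7 statements merged into one kernel-verified Lean document; each statement's English description precedes it below -/
import Mathlib

section
/- Let P be a preference profile on voters N = {1,…,n} and let K be a subset of the non-abstainers N∖𝒜. Then there exists a Nash-stable delegation function d with Gurus(d) = K if and only if K is a kernel of the delegation-acceptability digraph G_P^*. -/
namespace LD

variable {V : Type*}

/-- Alternatives: `none` is abstention (0), `some j` means voter `j`. -/
abbrev Alt (V : Type*) := Option V

/-- A preference profile: each voter has a strict linear (total) order on alternatives. -/
def IsProfile (pref : V → Option V → Option V → Prop) : Prop :=
  ∀ i : V, IsStrictTotalOrder (Option V) (pref i)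

/-- Voter `i` is an abstainer if she prefers abstention to voting. -/
def Abstainer (pref : V → Option V → Option V → Prop) (i : V) : Prop :=
  pref i none (some i)

/-- `j ∈ Acc i`: voter `i` accepts `j` as a guru. -/
def Acc (pref : V → Option V → Option V → Prop) (i j : V) : Prop :=
  j ≠ i ∧ pref i (some j) (some i) ∧ pref i (some j) none

/-- Gurus of a delegation function: voters who vote themselves. -/
def Gurus (d : V → Option V) : Set V := {i | d i = some i}

/-- `K` is a kernel of the digraph with vertex set `S` and arc relation `A`:
independent and absorbing. -/
def Kernel (S : Set V) (A : V → V → Prop) (K : Set V) : Prop :=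
  K ⊆ S ∧ (∀ i ∈ K, ∀ j ∈ K, ¬ A i j) ∧ ∀ u ∈ S, u ∉ K → ∃ k ∈ K, A u k

variable [DecidableEq V] [Fintype V]

/-- Fuel-based iteration of the delegation function. -/
def guIter (d : V → Option V) : ℕ → V → Option V
  | 0, _ => none
  | k + 1, i =>
    match d i with
    | none => none
    | some j => if j = i then some i else guIter d k j

/-- The guru of voter `i`: the voter reached from `i` by following delegations
(`none`, i.e. abstention, if the delegations from `i` abstain or enter a cycle). -/
def gu (d : V → Option V) (i : V) : Option V :=
  guIter d (Fintype.card V + 1) i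

/-- Nash-stability of a delegation function. -/
def NashStable (pref : V → Option V → Option V → Prop) (d : V → Option V) : Prop :=
  ∀ i : V, ∀ g : Option V,
    ((∃ j ∈ Gurus d, g = some j) ∨ g = none ∨ g = some i) →
    g ≠ gu d i → pref i (gu d i) g

end LD



namespace LD
variable {V : Type*} [DecidableEq V]

lemma guIter_guru (d : V → Option V) :
    ∀ k i j, guIter d k i = some j → d j = some j := by
  intro k
  induction k with
  | zero => intro i j h; simp [guIter] at h
  | succ k ih =>
    intro i j h
    rw [guIter] at h
    split at h
    · simp at h
    · rename_i m heq
      split at h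
      · rename_i hm
        injection h with h'
        subst h'
        rw [heq, hm]
      · exact ih m j h

variable [Fintype V]

lemma gu_self (d : V → Option V) (i : V) (h : d i = some i) : gu d i = some i := by
  simp [gu, guIter, h]

lemma gu_none (d : V → Option V) (i : V) (h : d i = none) : gu d i = none := by
  simp [gu, guIter, h]

lemma gu_step (d : V → Option V) (i k : V) (h : d i = some k) (hki : k ≠ i)
    (hk : d k = some k) : gu d i = some k := by
  have hc : 0 < Fintype.card V := Fintype.card_pos_iff.mpr ⟨i⟩
  obtain ⟨m, hm⟩ := Nat.exists_eq_succ_of_ne_zero hc.ne'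
  simp [gu, hm, guIter, h, hki, hk]

lemma exists_max' {α : Type*} (r : α → α → Prop)
    (htr : ∀ a b c, r a b → r b c → r a c)
    (htri : ∀ a b, r a b ∨ a = b ∨ r b a) :
    ∀ s : Finset α, s.Nonempty → ∃ m ∈ s, ∀ a ∈ s, a ≠ m → r m a := by
  classical
  intro s
  induction s using Finset.induction_on with
  | empty => rintro ⟨x, hx⟩; simp at hx
  | @insert x t hx ih =>
    intro _
    rcases t.eq_empty_or_nonempty with rfl | ht
    · exact ⟨x, by simp, by simp⟩
    · obtain ⟨m, hm, hmax⟩ := ih ht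
      rcases htri x m with hxm | rfl | hmx
      · refine ⟨x, Finset.mem_insert_self _ _, ?_⟩
        intro a ha hax
        rcases Finset.mem_insert.mp ha with rfl | hat
        · exact absurd rfl hax
        · by_cases ham : a = m
          · subst ham; exact hxm
          · exact htr x m a hxm (hmax a hat ham)
      · exact absurd hm hx
      · refine ⟨m, Finset.mem_insert_of_mem hm, ?_⟩
        intro a ha ham
        rcases Finset.mem_insert.mp ha with rfl | hat
        · exact hmx
        · exact hmax a hat ham

end LD

open LD in
/-- Theorem: equilibria ↔ kernels.
Given a preference profile `P` on voters `{1,…,n}` and a subset `K` of the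
non-abstainers, there exists a Nash-stable delegation function `d` with
`Gurus d = K` iff `K` is a kernel of the delegation-acceptability digraph
`G_P^*` (vertex set: non-abstainers, arcs: `Acc`). -/
theorem equilibrium_iff_kernel {n : ℕ}
    (pref : Fin n → Option (Fin n) → Option (Fin n) → Prop)
    (hP : IsProfile pref) (K : Set (Fin n))
    (hK : K ⊆ {i | ¬ Abstainer pref i}) :
    (∃ d : Fin n → Option (Fin n), NashStable pref d ∧ Gurus d = K) ↔
      Kernel {i | ¬ Abstainer pref i} (Acc pref) K := by
  classical
  constructor
  · rintro ⟨d, hNS, rfl⟩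
    refine ⟨hK, ?_, ?_⟩
    · intro i hi j hj hAcc
      obtain ⟨hne, h1, h2⟩ := hAcc
      haveI := hP i
      have hgi : gu d i = some i := gu_self d i hi
      have hp : pref i (some i) (some j) := by
        have := hNS i (some j) (Or.inl ⟨j, hj, rfl⟩)
          (by rw [hgi]; exact fun h => hne (Option.some_injective _ h))
        rwa [hgi] at this
      exact irrefl_of (pref i) (some j) (trans_of (pref i) h1 hp)
    · intro u hu huK
      cases hgu : gu d u with
      | none =>
        have := hNS u (some u) (Or.inr (Or.inr rfl)) (by rw [hgu]; simp)
        rw [hgu] at this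
        exact absurd this hu
      | some k =>
        have hkG : k ∈ Gurus d := guIter_guru d _ u k hgu
        have hku : k ≠ u := fun h => huK (h ▸ hkG)
        refine ⟨k, hkG, hku, ?_, ?_⟩
        · have := hNS u (some u) (Or.inr (Or.inr rfl))
            (by rw [hgu]; exact fun h => hku (Option.some_injective _ h.symm))
          rwa [hgu] at this
        · have := hNS u none (Or.inr (Or.inl rfl)) (by rw [hgu]; simp)
          rwa [hgu] at this
  · rintro ⟨hKS, hInd, hAbs⟩
    have htr : ∀ i (a b c : Option (Fin n)), pref i a b → pref i b c → pref i a c := by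
      intro i; haveI := hP i; exact fun a b c => trans_of (pref i)
    have htri : ∀ i (a b : Option (Fin n)), pref i a b ∨ a = b ∨ pref i b a := by
      intro i; haveI := hP i; exact fun a b => trichotomous_of (pref i) a b
    have hasym : ∀ i (a b : Option (Fin n)), pref i a b → ¬ pref i b a := by
      intro i a b h1 h2
      haveI := hP i
      exact irrefl_of (pref i) a (htr i a b a h1 h2)
    set Ai : Fin n → Finset (Option (Fin n)) :=
      fun i => insert none (insert (some i)
        ((Finset.univ.filter (· ∈ K)).image some)) with hAi
    have hmemAi : ∀ (i : Fin n) (x : Option (Fin n)),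
        x ∈ Ai i ↔ x = none ∨ x = some i ∨ ∃ k ∈ K, x = some k := by
      intro i x
      simp only [hAi, Finset.mem_insert, Finset.mem_image, Finset.mem_filter,
        Finset.mem_univ, true_and]
      constructor
      · rintro (h | h | ⟨k, hk, rfl⟩)
        · exact Or.inl h
        · exact Or.inr (Or.inl h)
        · exact Or.inr (Or.inr ⟨k, hk, rfl⟩)
      · rintro (h | h | ⟨k, hk, rfl⟩)
        · exact Or.inl h
        · exact Or.inr (Or.inl h)
        · exact Or.inr (Or.inr ⟨k, hk, rfl⟩)
    have hne : ∀ i, (Ai i).Nonempty := fun i => ⟨none, Finset.mem_insert_self _ _⟩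
    choose m hmem hmax using fun i => exists_max' (pref i) (htr i) (htri i) (Ai i) (hne i)
    have hselfmem : ∀ i : Fin n, some i ∈ Ai i :=
      fun i => (hmemAi i _).mpr (Or.inr (Or.inl rfl))
    have hnonemem : ∀ i : Fin n, (none : Option (Fin n)) ∈ Ai i :=
      fun i => (hmemAi i _).mpr (Or.inl rfl)
    have hself : ∀ i ∈ K, m i = some i := by
      intro i hi
      rcases (hmemAi i (m i)).mp (hmem i) with h0 | h | ⟨k, hk, hmk⟩
      · exfalso
        have := hmax i (some i) (hselfmem i) (by rw [h0]; simp)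
        rw [h0] at this
        exact hK hi this
      · exact h
      · by_cases hki : k = i
        · rw [hmk, hki]
        · exfalso
          have h1 := hmax i (some i) (hselfmem i)
            (by rw [hmk]; exact fun h => hki (Option.some_injective _ h.symm))
          have h2 := hmax i none (hnonemem i) (by rw [hmk]; simp)
          rw [hmk] at h1 h2
          exact hInd i hi k hk ⟨hki, h1, h2⟩
    have hnotself : ∀ i : Fin n, i ∉ K → m i ≠ some i := by
      intro i hiK heq
      by_cases hiS : Abstainer pref i
      · have := hmax i none (hnonemem i) (by rw [heq]; simp)
        rw [heq] at this
        exact hasym i _ _ this hiS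
      · obtain ⟨k, hk, hkne, h1, h2⟩ := hAbs i hiS hiK
        have hki : k ≠ i := fun h => hiK (h ▸ hk)
        have := hmax i (some k) ((hmemAi i _).mpr (Or.inr (Or.inr ⟨k, hk, rfl⟩)))
          (by rw [heq]; exact fun h => hki (Option.some_injective _ h))
        rw [heq] at this
        exact hasym i _ _ h1 this
    have hGur : Gurus m = K := by
      ext i
      constructor
      · intro h
        by_contra hiK
        exact hnotself i hiK h
      · exact fun h => hself i h
    have hgu : ∀ i, gu m i = m i := by
      intro i
      by_cases hiK : i ∈ K
      · rw [hself i hiK]; exact gu_self m i (hself i hiK)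
      · rcases (hmemAi i (m i)).mp (hmem i) with h0 | h | ⟨k, hk, hmk⟩
        · rw [h0]; exact gu_none m i h0
        · exact absurd h (hnotself i hiK)
        · rw [hmk]
          exact gu_step m i k hmk (fun h => hiK (h ▸ hk)) (hself k hk)
    refine ⟨m, ?_, hGur⟩
    intro i g hg hne'
    have hgA : g ∈ Ai i := by
      rcases hg with ⟨j, hj, rfl⟩ | rfl | rfl
      · exact (hmemAi i _).mpr (Or.inr (Or.inr ⟨j, hGur ▸ hj, rfl⟩))
      · exact hnonemem i
      · exact hselfmem i
    rw [hgu i] at hne' ⊢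
    exact hmax i g hgA hne'
end

section
/- If P is a single-peaked preference profile, then its delegation-acceptability digraph G_P^* is an interval catch digraph (on the set of non-abstainers, ordered by the single-peaked axis). -/
namespace LD

/-- Single-peaked preference profile w.r.t. the order on `Fin n`. -/
def SinglePeaked {n : ℕ} (pref : Fin n → Option (Fin n) → Option (Fin n) → Prop) : Prop :=
  ∀ i j k : Fin n, ((i < j ∧ j < k) ∨ (k < j ∧ j < i)) → pref i (some j) (some k)

/-- A digraph with (linearly ordered) vertex set `S ⊆ Fin n` and arc relation `A`
is an interval catch digraph: the out-neighborhood of each vertex `i ∈ S` is the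
set of vertices of `S` in an interval `[l,r]` containing `i`, minus `i` itself. -/
def IntervalCatchOn {n : ℕ} (S : Set (Fin n)) (A : Fin n → Fin n → Prop) : Prop :=
  ∀ i ∈ S, ∃ l ∈ S, ∃ r ∈ S, l ≤ i ∧ i ≤ r ∧
    ∀ j ∈ S, (A i j ↔ (l ≤ j ∧ j ≤ r ∧ j ≠ i))

end LD

open LD in
/-- Proposition: SP profiles give interval catch digraphs.
If `P` is a single-peaked preference profile, then its delegation-acceptability
digraph `G_P^*` (on the non-abstainers, ordered by the single-peaked axis)
is an interval catch digraph. -/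
theorem singlePeaked_intervalCatch {n : ℕ}
    (pref : Fin n → Option (Fin n) → Option (Fin n) → Prop)
    (hP : IsProfile pref) (hSP : SinglePeaked pref) :
    IntervalCatchOn {i | ¬ Abstainer pref i} (Acc pref) := by
  classical
  intro i hi
  haveI := hP i
  have htrans : ∀ a b c, pref i a b → pref i b c → pref i a c := fun a b c h1 h2 =>
    trans_of (pref i) h1 h2
  set T : Finset (Fin n) :=
    Finset.univ.filter (fun j => (Acc pref i j ∧ ¬ Abstainer pref j) ∨ j = i) with hT
  have hmem : ∀ j, j ∈ T ↔ ((Acc pref i j ∧ ¬ Abstainer pref j) ∨ j = i) := by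
    intro j; simp [hT]
  have hiT : i ∈ T := (hmem i).2 (Or.inr rfl)
  have hne : T.Nonempty := ⟨i, hiT⟩
  set l := T.min' hne with hl
  set r := T.max' hne with hr
  have hlT := T.min'_mem hne
  have hrT := T.max'_mem hne
  have conv : ∀ j k, Acc pref i j → ((i < k ∧ k < j) ∨ (j < k ∧ k < i)) → Acc pref i k := by
    intro j k hj hbet
    have hkj : pref i (some k) (some j) := hSP i k j hbet
    have hki : k ≠ i := by rcases hbet with ⟨h1, _⟩ | ⟨_, h2⟩ <;> omega
    exact ⟨hki, htrans _ _ _ hkj hj.2.1, htrans _ _ _ hkj hj.2.2⟩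
  have hSmem : ∀ j ∈ T, j ∈ {i | ¬ Abstainer pref i} := by
    intro j hj
    rcases (hmem j).1 hj with ⟨_, h⟩ | rfl
    · exact h
    · exact hi
  refine ⟨l, hSmem l hlT, r, hSmem r hrT, T.min'_le i hiT, T.le_max' i hiT, ?_⟩
  intro j hj
  constructor
  · intro hAcc
    have hjT : j ∈ T := (hmem j).2 (Or.inl ⟨hAcc, hj⟩)
    exact ⟨T.min'_le j hjT, T.le_max' j hjT, hAcc.1⟩
  · rintro ⟨hlj, hjr, hji⟩
    rcases lt_trichotomy j i with hji' | rfl | hij'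
    · -- j < i, use l
      have hli : l ≠ i := by
        intro h; rw [h] at hlj; exact absurd (lt_of_le_of_lt hlj hji') (lt_irrefl i)
      have hAccl : Acc pref i l := by
        rcases (hmem l).1 hlT with ⟨h, _⟩ | h
        · exact h
        · exact absurd h hli
      rcases eq_or_lt_of_le hlj with rfl | hlj'
      · exact hAccl
      · exact conv l j hAccl (Or.inr ⟨hlj', hji'⟩)
    · exact absurd rfl hji
    · -- i < j, use r
      have hri : r ≠ i := by
        intro h; rw [h] at hjr; exact absurd (lt_of_lt_of_le hij' hjr) (lt_irrefl i)
      have hAccr : Acc pref i r := by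
        rcases (hmem r).1 hrT with ⟨h, _⟩ | h
        · exact h
        · exact absurd h hri
      rcases eq_or_lt_of_le hjr with rfl | hjr'
      · exact hAccr
      · exact conv r j hAccr (Or.inl ⟨hij', hjr'⟩)
end

section
/- Every single-peaked preference profile admits a Nash-stable delegation function (an equilibrium). -/
/-!
Call `j` acceptable to `i` when `i` prefers `j` both to voting herself and to abstaining. An
equilibrium is obtained from a kernel `K` of the acceptability digraph on the voters who prefer
voting to abstaining: every voter picks her favourite among abstention, herself and the members
of `K`. Independence of `K` makes its members pick themselves, absorption stops everybody else
from doing so, so the gurus are exactly the members of `K`.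

Under single-peakedness every voter's acceptable voters, together with herself, form an
interval, and digraphs of this kind have kernels. Reading a kernel from right to left, call
`t ∈ S` a head if some kernel of `S ∩ [t, ∞)` contains `t`. The maximum of `S` is a head, and the
least head `t` is acceptable to every point of `S` on its left, so that a kernel headed by `t`
is a kernel of `S`. This last fact is proved by strong induction on `S`: a point `u < t` of `S`
not accepting `t` is the minimum of `S` (otherwise induction on `S ∩ [u, ∞)` applies); if `t`
accepts `u`, then `t` accepts all of `S` on its left, so the least head of `S \ {t}` is a head of
`S`, lies to the right of `t` and is accepted by `u`, hence so is `t`; otherwise `u` itself is a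
head.
-/

namespace LD

theorem Kernel.of_subset {V : Type*} {A : V → V → Prop} {S T K : Set V} (hK : Kernel S A K)
    (hST : S ⊆ T) (habs : ∀ u ∈ T, u ∉ S → ∃ k ∈ K, A u k) : Kernel T A K :=
  ⟨hK.1.trans hST, hK.2.1, fun u hu huK =>
    (em (u ∈ S)).elim (fun huS => hK.2.2 u huS huK) (habs u hu)⟩

section Interval

open Set

variable {α : Type*} [LinearOrder α]

def ConvexOutNbhd (A : α → α → Prop) : Prop :=
  ∀ ⦃i j k : α⦄, (i < j ∧ j < k ∨ k < j ∧ j < i) → A i k → A i j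

def KernelHead (A : α → α → Prop) (S : Set α) (t : α) : Prop :=
  ∃ K, Kernel (S ∩ Ici t) A K ∧ t ∈ K

variable {A : α → α → Prop} {S : Set α}

theorem KernelHead.mem {t : α} (h : KernelHead A S t) : t ∈ S :=
  let ⟨_, hK, ht⟩ := h
  (hK.1 ht).1

theorem kernelHead_inter_Ici_iff {v t : α} (hvt : v ≤ t) :
    KernelHead A (S ∩ Ici v) t ↔ KernelHead A S t := by
  rw [KernelHead, KernelHead, inter_assoc, Ici_inter_Ici, sup_of_le_right hvt]

theorem kernelHead_of_isGreatest [Std.Irrefl A] {t : α} (ht : IsGreatest S t) :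
    KernelHead A S t := by
  refine ⟨{t}, ⟨?_, ?_, ?_⟩, rfl⟩
  · rintro _ rfl
    exact ⟨ht.1, le_rfl⟩
  · rintro _ rfl _ rfl
    exact irrefl _
  · rintro u ⟨hu, htu⟩ hne
    exact absurd (le_antisymm (ht.2 hu) htu) hne

theorem KernelHead.of_lt [Std.Irrefl A] (hA : ConvexOutNbhd A) {t u : α}
    (ht : KernelHead A S t) (hu : u ∈ S) (hut : u < t) (hnut : ¬ A u t) (hntu : ¬ A t u)
    (hbetween : ∀ w ∈ S, u < w → w < t → A w t) : KernelHead A S u := by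
  obtain ⟨K, ⟨hKS, hind, habs⟩, htK⟩ := ht
  have hKu : ∀ k ∈ K, ¬ A k u ∧ ¬ A u k := by
    intro k hk
    rcases (hKS hk).2.eq_or_lt with rfl | htk
    · exact ⟨hntu, hnut⟩
    · exact ⟨fun h => hind k hk t htK (hA (Or.inr ⟨hut, htk⟩) h),
        fun h => hnut (hA (Or.inl ⟨hut, htk⟩) h)⟩
  refine ⟨insert u K, ⟨?_, ?_, ?_⟩, mem_insert u K⟩
  · rintro k (rfl | hk)
    · exact ⟨hu, le_rfl⟩
    · exact ⟨(hKS hk).1, hut.le.trans (hKS hk).2⟩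
  · rintro k (rfl | hk) k' (rfl | hk')
    · exact irrefl _
    · exact (hKu k' hk').2
    · exact (hKu k hk).1
    · exact hind k hk k' hk'
  · rintro w ⟨hw, huw⟩ hwK
    have hwu : u < w := huw.lt_of_ne fun h => hwK (h ▸ mem_insert u K)
    rcases lt_or_ge w t with hwt | htw
    · exact ⟨t, mem_insert_of_mem _ htK, hbetween w hw hwu hwt⟩
    · obtain ⟨k, hk, hwk⟩ := habs w ⟨hw, htw⟩ fun h => hwK (mem_insert_of_mem _ h)
      exact ⟨k, mem_insert_of_mem _ hk, hwk⟩

variable [Finite α]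

theorem exists_isLeast_kernelHead [Std.Irrefl A] (hS : S.Nonempty) :
    ∃ t, IsLeast {x | KernelHead A S x} t := by
  obtain ⟨m, hm, hmax⟩ := S.exists_max_image id S.toFinite hS
  obtain ⟨t, ht, hmin⟩ := wellFounded_lt.has_min {x | KernelHead A S x}
    ⟨m, kernelHead_of_isGreatest ⟨hm, hmax⟩⟩
  exact ⟨t, ht, fun x hx => not_lt.1 (hmin x hx)⟩

theorem rel_of_lt_of_isLeast_kernelHead [Std.Irrefl A] (hA : ConvexOutNbhd A) {t u : α}
    (ht : IsLeast {x | KernelHead A S x} t) (hu : u ∈ S) (hut : u < t) : A u t := by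
  induction S using WellFoundedLT.induction generalizing t u with
  | _ S IH =>
  by_contra hnut
  have hinner : ∀ v ∈ S, v < t → (∃ x ∈ S, x < v) → A v t := by
    rintro v hv hvt ⟨x, hx, hxv⟩
    refine IH (S ∩ Ici v) ⟨inter_subset_left, fun h => (h hx).2.not_gt hxv⟩
      ⟨(kernelHead_inter_Ici_iff hvt.le).2 ht.1, fun w hw => ?_⟩ ⟨hv, le_rfl⟩ hvt
    exact ht.2 ((kernelHead_inter_Ici_iff hw.mem.2).1 hw)
  have hmin : ∀ x ∈ S, u ≤ x := fun x hx =>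
    not_lt.1 fun hxu => hnut (hinner u hu hut ⟨x, hx, hxu⟩)
  by_cases htu : A t u
  · have htabs : ∀ x ∈ S, x < t → A t x := fun x hx hxt =>
      (hmin x hx).eq_or_lt.elim (fun h => h ▸ htu) fun hux => hA (Or.inr ⟨hux, hxt⟩) htu
    obtain ⟨τ, hτ⟩ := exists_isLeast_kernelHead (A := A) (S := S \ {t}) ⟨u, hu, hut.ne⟩
    have hτt : τ ≠ t := hτ.1.mem.2
    have hτS : KernelHead A S τ := by
      obtain ⟨K, hK, hτK⟩ := hτ.1
      refine ⟨K, hK.of_subset (inter_subset_inter_left _ sdiff_subset) ?_, hτK⟩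
      rintro x ⟨hx, hτx⟩ hx'
      obtain rfl : x = t := by_contra fun h => hx' ⟨⟨hx, h⟩, hτx⟩
      exact ⟨τ, hτK, htabs τ hτ.1.mem.1 (hτx.lt_of_ne hτt)⟩
    have htτ : t < τ := (ht.2 hτS).lt_of_ne hτt.symm
    have huτ := IH (S \ {t}) (sdiff_singleton_ssubset.2 ht.1.mem) hτ ⟨hu, hut.ne⟩ (hut.trans htτ)
    exact hnut (hA (Or.inl ⟨hut, htτ⟩) huτ)
  · have hu_head : KernelHead A S u :=
      ht.1.of_lt hA hu hut hnut htu fun w hw huw hwt => hinner w hw hwt ⟨u, hu, huw⟩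
    exact (ht.2 hu_head).not_gt hut

theorem exists_kernel [Std.Irrefl A] (hA : ConvexOutNbhd A) (S : Set α) :
    ∃ K, Kernel S A K := by
  rcases S.eq_empty_or_nonempty with rfl | hS
  · exact ⟨∅, empty_subset _, fun _ h => h.elim, fun _ h => h.elim⟩
  obtain ⟨t, ht⟩ := exists_isLeast_kernelHead (A := A) hS
  obtain ⟨K, hK, htK⟩ := ht.1
  refine ⟨K, hK.of_subset inter_subset_left fun u hu hut => ⟨t, htK, ?_⟩⟩
  exact rel_of_lt_of_isLeast_kernelHead hA ht hu (not_le.1 fun h => hut ⟨hu, h⟩)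

end Interval

section Equilibrium

variable {V : Type*}

theorem exists_mem_forall_ne_rel {β : Type*} [Finite β] (r : β → β → Prop)
    [IsStrictTotalOrder β r] {s : Set β} (hs : s.Nonempty) :
    ∃ b ∈ s, ∀ x ∈ s, x ≠ b → r b x := by
  obtain ⟨b, hb, hmax⟩ := (Finite.wellFounded_of_trans_of_irrefl r).has_min s hs
  refine ⟨b, hb, fun x hx hxb => ?_⟩
  rcases trichotomous_of r b x with h | rfl | h
  · exact h
  · exact absurd rfl hxb
  · exact absurd h (hmax x hx)

theorem rel_some_none_of_not_abstainer {pref : V → Option V → Option V → Prop}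
    (hP : IsProfile pref) {i : V} (hi : ¬ Abstainer pref i) : pref i (some i) none := by
  have := hP i
  rcases trichotomous_of (pref i) (some i) none with h | h | h
  · exact h
  · exact absurd h (Option.some_ne_none i)
  · exact absurd h hi

variable [DecidableEq V] [Fintype V]

theorem gu_eq_of_forall_apply_eq_some {d : V → Option V} {i : V}
    (h : ∀ j, d i = some j → d j = some j) : gu d i = d i := by
  obtain ⟨m, hm⟩ := Nat.exists_eq_succ_of_ne_zero (Fintype.card_pos_iff.2 ⟨i⟩).ne'
  rw [gu, hm]
  cases hdi : d i with
  | none => simp [guIter, hdi]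
  | some j => simp [guIter, hdi, h j hdi, eq_comm]

theorem exists_nashStable_of_kernel {pref : V → Option V → Option V → Prop}
    (hP : IsProfile pref) {K : Set V} (hK : Kernel {i | ¬ Abstainer pref i} (Acc pref) K) :
    ∃ d, NashStable pref d := by
  choose d hd hbest using fun i =>
    have := hP i
    exists_mem_forall_ne_rel (pref i) (s := {g | (∃ j ∈ K, g = some j) ∨ g = none ∨ g = some i})
      ⟨none, Or.inr (Or.inl rfl)⟩
  have hgurus : Gurus d = K := by
    ext i
    have := hP i
    constructor
    · intro (hi : d i = some i)
      by_contra hiK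
      by_cases hab : Abstainer pref i
      · exact asymm hab (hi ▸ hbest i none (Or.inr (Or.inl rfl)) (by simp [hi]))
      · obtain ⟨k, hk, hki, hpref, -⟩ := hK.2.2 i hab hiK
        exact asymm hpref (hi ▸ hbest i (some k) (Or.inl ⟨k, hk, rfl⟩) (by simpa [hi] using hki))
    · intro hiK
      by_contra hne
      have hbeat := hbest i (some i) (Or.inr (Or.inr rfl)) (Ne.symm hne)
      have hvote := rel_some_none_of_not_abstainer hP (hK.1 hiK)
      rcases hd i with ⟨j, hj, hdj⟩ | hdn | hds
      · rw [hdj] at hbeat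
        exact hK.2.1 i hiK j hj ⟨fun h => hne (h ▸ hdj), hbeat, _root_.trans hbeat hvote⟩
      · rw [hdn] at hbeat
        exact asymm hvote hbeat
      · exact hne hds
  have hgu : ∀ i, gu d i = d i := fun i => gu_eq_of_forall_apply_eq_some fun j hj => by
    rcases hd i with ⟨k, hk, hdk⟩ | hdn | hds
    · obtain rfl : j = k := Option.some_injective _ (hj.symm.trans hdk)
      exact (hgurus.symm ▸ hk : j ∈ Gurus d)
    · simp [hdn] at hj
    · obtain rfl : j = i := Option.some_injective _ (hj.symm.trans hds)
      exact hds
  refine ⟨d, fun i g hg hne => ?_⟩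
  rw [hgu] at hne ⊢
  rw [hgurus] at hg
  exact hbest i g hg hne

end Equilibrium

theorem SinglePeaked.convexOutNbhd_acc {n : ℕ}
    {pref : Fin n → Option (Fin n) → Option (Fin n) → Prop} (hP : IsProfile pref)
    (hSP : SinglePeaked pref) : ConvexOutNbhd (Acc pref) := by
  rintro i j k hjk ⟨-, hki, hkn⟩
  have := hP i
  have hjk' := hSP i j k hjk
  refine ⟨?_, _root_.trans hjk' hki, _root_.trans hjk' hkn⟩
  rcases hjk with ⟨hij, -⟩ | ⟨-, hji⟩
  exacts [hij.ne', hji.ne]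

end LD

open LD in
/-- every single-peaked preference profile admits a Nash-stable
delegation function (an equilibrium). -/
theorem singlePeaked_has_equilibrium {n : ℕ}
    (pref : Fin n → Option (Fin n) → Option (Fin n) → Prop)
    (hP : IsProfile pref) (hSP : SinglePeaked pref) :
    ∃ d : Fin n → Option (Fin n), NashStable pref d := by
  have : Std.Irrefl (Acc pref) := ⟨fun _ h => h.1 rfl⟩
  obtain ⟨K, hK⟩ := exists_kernel (hSP.convexOutNbhd_acc hP) {i | ¬ Abstainer pref i}
  exact exists_nashStable_of_kernel hP hK
end

section
/- Let P be a single-peaked preference profile with delegation-acceptability digraph G_P^* on ordered vertex set {1,…,n}, and let G^aux be its auxiliary digraph. Then a set K ⊆ {1,…,n} is a kernel of G_P^* if and only if K is the set of internal vertices of an s–t path in G^aux; this gives a one-to-one correspondence between kernels of G_P^* (equivalently, sets of gurus of equilibria for P) and s–t paths in G^aux. -/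
namespace LD

/-- If `i` accepts `k'` and `j` is strictly between `i` and `k'`, then `i` accepts `j`. -/
lemma acc_between {n : ℕ} {pref : Fin n → Option (Fin n) → Option (Fin n) → Prop}
    (hP : IsProfile pref) (hSP : SinglePeaked pref) {u j k' : Fin n}
    (h : (u < j ∧ j < k') ∨ (k' < j ∧ j < u)) (ha : Acc pref u k') : Acc pref u j := by
  have htr : ∀ a b c, pref u a b → pref u b c → pref u a c := fun a b c =>
    (hP u).trans a b c
  have hjk : pref u (some j) (some k') := hSP u j k' h
  refine ⟨?_, htr _ _ _ hjk ha.2.1, htr _ _ _ hjk ha.2.2⟩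
  rcases h with ⟨h1, _⟩ | ⟨_, h2⟩
  · exact h1.ne'
  · exact h2.ne

end LD

open LD in
/-- kernels of `G_P^*` ↔ `s–t` paths of the auxiliary digraph.
For a single-peaked profile `P` whose non-abstainers are `{1,…,n}`, a set `K` is
a kernel of `G_P^*` iff `K` is the set of internal vertices of an `s–t` path of
the auxiliary digraph `G^aux`.  An `s–t` path of `G^aux` is encoded by the
strictly increasing enumeration `k^1 < ⋯ < k^p` (`p ≥ 1`) of its internal
vertices, together with the existence of its arcs: the arc `(s,k^1)` exists iff
`{k^1}` is a kernel of `G_P^*[{1,…,k^1}]`; the arc `(k^p,t)` exists iff `{k^p}`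
is a kernel of `G_P^*[{k^p,…,n}]`; and the arc `(k^t,k^{t+1})` exists iff
`{k^t,k^{t+1}}` is a kernel of `G_P^*[{k^t,…,k^{t+1}}]`.  Since all arcs of
`G^aux` go strictly from left to right, this is a one-to-one correspondence
between kernels of `G_P^*` (equivalently, sets of gurus of equilibria of `P`)
and `s–t` paths of `G^aux`. -/
theorem kernels_correspond_to_st_paths {n : ℕ} (hn : 0 < n)
    (pref : Fin n → Option (Fin n) → Option (Fin n) → Prop)
    (hP : IsProfile pref) (hSP : SinglePeaked pref)
    (hNoAbs : ∀ i : Fin n, ¬ Abstainer pref i) (K : Set (Fin n)) :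
    Kernel Set.univ (Acc pref) K ↔
      ∃ (p : ℕ) (hp : 0 < p) (k : Fin p → Fin n), StrictMono k ∧ Set.range k = K ∧
        Kernel (Set.Iic (k ⟨0, hp⟩)) (Acc pref) {k ⟨0, hp⟩} ∧
        Kernel (Set.Ici (k ⟨p - 1, by omega⟩)) (Acc pref) {k ⟨p - 1, by omega⟩} ∧
        ∀ (t : ℕ) (ht : t + 1 < p),
          Kernel (Set.Icc (k ⟨t, by omega⟩) (k ⟨t + 1, ht⟩)) (Acc pref)
            {k ⟨t, by omega⟩, k ⟨t + 1, ht⟩} := by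
  constructor
  · rintro ⟨-, hind, habs⟩
    -- K is nonempty
    have hKne : K.Nonempty := by
      by_contra hE
      rw [Set.not_nonempty_iff_eq_empty] at hE
      obtain ⟨x, hx, -⟩ := habs ⟨0, hn⟩ trivial (by simp [hE])
      simp [hE] at hx
    classical
    set F := (Set.toFinite K).toFinset with hF
    have hFK : ∀ x, x ∈ F ↔ x ∈ K := fun x => (Set.toFinite K).mem_toFinset
    set p := F.card with hpdef
    have hp : 0 < p := by
      obtain ⟨x, hx⟩ := hKne
      exact Finset.card_pos.2 ⟨x, (hFK x).2 hx⟩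
    set e := F.orderIsoOfFin rfl with he
    set k : Fin p → Fin n := fun i => (e i : Fin n) with hk
    have hmono : StrictMono k := fun a b hab => by
      exact_mod_cast e.strictMono hab
    have hkK : ∀ i, k i ∈ K := fun i => (hFK _).1 (e i).2
    have hrange : Set.range k = K := by
      ext x
      constructor
      · rintro ⟨i, rfl⟩; exact hkK i
      · intro hx
        have hxF : x ∈ F := (hFK x).2 hx
        exact ⟨e.symm ⟨x, hxF⟩, by simp [hk]⟩
    have hmem : ∀ x ∈ K, ∃ i, k i = x := fun x hx => by
      rw [← hrange] at hx; exact hx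
    refine ⟨p, hp, k, hmono, hrange, ⟨?_, ?_, ?_⟩, ⟨?_, ?_, ?_⟩, ?_⟩
    · intro x hx
      simp only [Set.mem_singleton_iff] at hx
      subst hx; exact Set.mem_Iic.2 le_rfl
    · intro i hi j hj
      simp only [Set.mem_singleton_iff] at hi hj
      subst hi; subst hj; rintro ⟨h, -⟩; exact h rfl
    · -- absorbing for Iic k0
      intro u hu hu0
      simp only [Set.mem_singleton_iff] at hu0
      have hult : u < k ⟨0, hp⟩ := lt_of_le_of_ne hu hu0
      have huK : u ∉ K := by
        intro huK
        obtain ⟨i, rfl⟩ := hmem u huK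
        have h2 : i < (⟨0, hp⟩ : Fin p) := hmono.lt_iff_lt.1 hult
        exact Nat.not_lt_zero _ h2
      obtain ⟨x, hxK, hax⟩ := habs u trivial huK
      obtain ⟨i, rfl⟩ := hmem x hxK
      refine ⟨k ⟨0, hp⟩, rfl, ?_⟩
      rcases eq_or_lt_of_le (hmono.monotone (show (⟨0, hp⟩ : Fin p) ≤ i from Nat.zero_le _)) with
        heq | hlt
      · exact heq ▸ hax
      · exact acc_between hP hSP (Or.inl ⟨hult, hlt⟩) hax
    · intro x hx
      simp only [Set.mem_singleton_iff] at hx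
      subst hx; exact Set.mem_Ici.2 le_rfl
    · intro i hi j hj
      simp only [Set.mem_singleton_iff] at hi hj
      subst hi; subst hj; rintro ⟨h, -⟩; exact h rfl
    · -- absorbing for Ici k_{p-1}
      intro u hu hu0
      simp only [Set.mem_singleton_iff] at hu0
      have hult : k ⟨p - 1, by omega⟩ < u := lt_of_le_of_ne hu (Ne.symm hu0)
      have huK : u ∉ K := by
        intro huK
        obtain ⟨i, rfl⟩ := hmem u huK
        have : i ≤ ⟨p - 1, by omega⟩ := by
          rcases i with ⟨iv, hiv⟩
          exact Fin.mk_le_mk.2 (by omega)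
        exact absurd (hmono.monotone this) (not_le.2 hult)
      obtain ⟨x, hxK, hax⟩ := habs u trivial huK
      obtain ⟨i, rfl⟩ := hmem x hxK
      refine ⟨k ⟨p - 1, by omega⟩, rfl, ?_⟩
      have hile : i ≤ ⟨p - 1, by omega⟩ := by
        rcases i with ⟨iv, hiv⟩
        exact Fin.mk_le_mk.2 (by omega)
      rcases eq_or_lt_of_le (hmono.monotone hile) with heq | hlt
      · exact heq ▸ hax
      · exact acc_between hP hSP (Or.inr ⟨hlt, hult⟩) hax
    · -- consecutive pairs
      intro t ht
      refine ⟨?_, ?_, ?_⟩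
      · intro x hx
        rcases hx with rfl | hx
        · exact ⟨le_refl _, (hmono (by exact Fin.mk_lt_mk.2 (by omega))).le⟩
        · simp only [Set.mem_singleton_iff] at hx
          subst hx
          exact ⟨(hmono (by exact Fin.mk_lt_mk.2 (by omega))).le, le_refl _⟩
      · intro i hi j hj
        have hiK : i ∈ K := by
          rcases hi with rfl | hi
          · exact hkK _
          · simp only [Set.mem_singleton_iff] at hi; subst hi; exact hkK _
        have hjK : j ∈ K := by
          rcases hj with rfl | hj
          · exact hkK _
          · simp only [Set.mem_singleton_iff] at hj; subst hj; exact hkK _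
        exact hind i hiK j hjK
      · intro u hu hu0
        have hune1 : u ≠ k ⟨t, by omega⟩ := fun h => hu0 (Or.inl h)
        have hune2 : u ≠ k ⟨t + 1, ht⟩ := fun h => hu0 (Or.inr h)
        have h1 : k ⟨t, by omega⟩ < u := lt_of_le_of_ne hu.1 (Ne.symm hune1)
        have h2 : u < k ⟨t + 1, ht⟩ := lt_of_le_of_ne hu.2 hune2
        have huK : u ∉ K := by
          intro huK
          obtain ⟨⟨iv, hiv⟩, rfl⟩ := hmem u huK
          have hgt : (⟨t, by omega⟩ : Fin p) < ⟨iv, hiv⟩ := hmono.lt_iff_lt.1 h1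
          have hlt : (⟨iv, hiv⟩ : Fin p) < ⟨t + 1, ht⟩ := hmono.lt_iff_lt.1 h2
          rw [Fin.mk_lt_mk] at hgt hlt
          omega
        obtain ⟨x, hxK, hax⟩ := habs u trivial huK
        obtain ⟨⟨iv, hiv⟩, rfl⟩ := hmem x hxK
        by_cases hc : iv ≤ t
        · refine ⟨k ⟨t, by omega⟩, Or.inl rfl, ?_⟩
          rcases eq_or_lt_of_le
            (hmono.monotone (show (⟨iv, hiv⟩ : Fin p) ≤ ⟨t, by omega⟩ from
              Fin.mk_le_mk.2 hc)) with heq | hlt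
          · exact heq ▸ hax
          · exact acc_between hP hSP (Or.inr ⟨hlt, h1⟩) hax
        · refine ⟨k ⟨t + 1, ht⟩, Or.inr rfl, ?_⟩
          rcases eq_or_lt_of_le
            (hmono.monotone (show (⟨t + 1, ht⟩ : Fin p) ≤ ⟨iv, hiv⟩ from
              Fin.mk_le_mk.2 (by omega))) with heq | hlt
          · exact (heq.symm) ▸ hax
          · exact acc_between hP hSP (Or.inl ⟨h2, hlt⟩) hax
  · rintro ⟨p, hp, k, hmono, hrange, ⟨-, -, habs0⟩, ⟨-, -, habsL⟩, hpair⟩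
    refine ⟨fun _ _ => trivial, ?_, ?_⟩
    · -- independence
      rintro x hx y hy hxy
      rw [← hrange] at hx hy
      obtain ⟨⟨a, ha⟩, rfl⟩ := hx
      obtain ⟨⟨b, hb⟩, rfl⟩ := hy
      have hab : a ≠ b := by
        rintro rfl
        exact hxy.1 rfl
      rcases lt_or_gt_of_ne hab with h | h
      · -- a < b : k a accepts k (a+1), contradicting pair (a, a+1)
        have ha1 : a + 1 < p := by omega
        obtain ⟨-, hind, -⟩ := hpair a ha1
        have hacc : Acc pref (k ⟨a, ha⟩) (k ⟨a + 1, ha1⟩) := by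
          rcases eq_or_lt_of_le (show a + 1 ≤ b by omega) with heq | hlt
          · have : (⟨a + 1, ha1⟩ : Fin p) = ⟨b, hb⟩ := Fin.mk_eq_mk.2 heq
            rw [this]; exact hxy
          · refine acc_between hP hSP (Or.inl ⟨?_, ?_⟩) hxy
            · exact hmono (Fin.mk_lt_mk.2 (by omega))
            · exact hmono (Fin.mk_lt_mk.2 hlt)
        exact hind _ (Or.inl rfl) _ (Or.inr rfl) hacc
      · -- b < a
        have ha1 : (a - 1) + 1 < p := by omega
        obtain ⟨-, hind, -⟩ := hpair (a - 1) ha1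
        have hkeq : (⟨(a - 1) + 1, ha1⟩ : Fin p) = ⟨a, ha⟩ := Fin.mk_eq_mk.2 (by omega)
        have hacc : Acc pref (k ⟨a, ha⟩) (k ⟨a - 1, by omega⟩) := by
          rcases eq_or_lt_of_le (show b ≤ a - 1 by omega) with heq | hlt
          · have : (⟨b, hb⟩ : Fin p) = ⟨a - 1, by omega⟩ := Fin.mk_eq_mk.2 heq
            rw [← this]; exact hxy
          · refine acc_between hP hSP (Or.inr ⟨?_, ?_⟩) hxy
            · exact hmono (Fin.mk_lt_mk.2 hlt)
            · exact hmono (Fin.mk_lt_mk.2 (by omega))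
        refine hind _ (Or.inr rfl) _ (Or.inl rfl) ?_
        rw [hkeq]
        exact hacc
    · -- absorbing
      intro u _ huK
      rw [← hrange] at huK
      by_cases h0 : u < k ⟨0, hp⟩
      · obtain ⟨x, hx, hax⟩ := habs0 u h0.le (fun hh => h0.ne (by simpa using hh))
        simp only [Set.mem_singleton_iff] at hx
        subst hx
        exact ⟨_, hrange ▸ Set.mem_range_self _, hax⟩
      by_cases hL : k ⟨p - 1, by omega⟩ < u
      · obtain ⟨x, hx, hax⟩ := habsL u hL.le
          (fun hh => hL.ne' (by simpa using hh))
        simp only [Set.mem_singleton_iff] at hx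
        subst hx
        exact ⟨_, hrange ▸ Set.mem_range_self _, hax⟩
      push_neg at h0 hL
      classical
      set P : ℕ → Prop := fun t => ∃ ht : t < p, k ⟨t, ht⟩ ≤ u with hPdef
      have hP0 : P 0 := ⟨hp, h0⟩
      set t := Nat.findGreatest P (p - 1) with htdef
      have hPt : P t := Nat.findGreatest_spec (Nat.zero_le _) hP0
      have htle : t ≤ p - 1 := Nat.findGreatest_le _
      obtain ⟨htp, htu⟩ := hPt
      have ht1 : t + 1 < p := by
        rcases Nat.lt_or_ge (t + 1) p with h | h
        · exact h
        · exfalso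
          have hke : k ⟨t, htp⟩ = k ⟨p - 1, by omega⟩ := by
            congr 1
            exact Fin.mk_eq_mk.2 (by omega)
          rw [hke] at htu
          exact huK ⟨_, (le_antisymm hL htu).symm⟩
      have hnP : ¬ P (t + 1) :=
        Nat.findGreatest_is_greatest (Nat.lt_succ_self _) (by omega)
      have hu2 : u < k ⟨t + 1, ht1⟩ := by
        by_contra hc
        exact hnP ⟨ht1, not_lt.1 hc⟩
      obtain ⟨-, -, habsP⟩ := hpair t ht1
      have huKp : u ∉ ({k ⟨t, by omega⟩, k ⟨t + 1, ht1⟩} : Set (Fin n)) := by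
        rintro (hx | hx)
        · rw [hx] at huK; exact huK (Set.mem_range_self _)
        · simp only [Set.mem_singleton_iff] at hx
          rw [hx] at huK; exact huK (Set.mem_range_self _)
      obtain ⟨x, hx, hax⟩ := habsP u ⟨htu, hu2.le⟩ huKp
      refine ⟨x, ?_, hax⟩
      rw [← hrange]
      rcases hx with hx | hx
      · rw [hx]; exact Set.mem_range_self _
      · simp only [Set.mem_singleton_iff] at hx
        rw [hx]; exact Set.mem_range_self _
end

section
/- There exist a symmetrical preference profile on 4 voters, a token function T in which each voter receives the token infinitely often, and an improved-response dynamics starting from the delegation function d_0 in which every voter votes (d_0(i)=i for all i), such that the dynamics does not converge (the sequence of delegation functions is eventually periodic with period greater than 1). In particular, one may take Acc(1)=Acc(3)={2,4} and Acc(2)=Acc(4)={1,3}, with every voter preferring to vote rather than to abstain. -/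
namespace LD

variable {V : Type*} [DecidableEq V] [Fintype V]

/-- `dnext` is obtained from `dprev` by a *best response* of voter `i`:
only `i`'s delegation may change, the resulting guru of `i` is (weakly) her most
preferred among all outcomes achievable by changing her own delegation, and if
her current outcome is already best she does not change her delegation
(so that a best response is also an improved response). -/
def BestResponse (pref : V → Option V → Option V → Prop)
    (dprev : V → Option V) (i : V) (dnext : V → Option V) : Prop :=
  (∀ j : V, j ≠ i → dnext j = dprev j) ∧
  (∀ c : Option V,
      gu (Function.update dprev i c) i ≠ gu dnext i →
      pref i (gu dnext i) (gu (Function.update dprev i c) i)) ∧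
  (gu dnext i = gu dprev i → dnext i = dprev i)

/-- `dnext` is obtained from `dprev` by an *improved response* of voter `i`:
only `i`'s delegation may change, and either her outcome strictly improves, or
no strictly improving move exists and she keeps her delegation unchanged. -/
def ImprovedResponse (pref : V → Option V → Option V → Prop)
    (dprev : V → Option V) (i : V) (dnext : V → Option V) : Prop :=
  (∀ j : V, j ≠ i → dnext j = dprev j) ∧
  (pref i (gu dnext i) (gu dprev i) ∨
    (dnext i = dprev i ∧
      ∀ c : Option V, ¬ pref i (gu (Function.update dprev i c) i) (gu dprev i)))

/-- Every voter receives the token at least once during the steps `a,…,b`. -/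
def Covers (T : ℕ → V) (a b : ℕ) : Prop :=
  ∀ i : V, ∃ t : ℕ, a ≤ t ∧ t ≤ b ∧ T t = i

/-- Every voter receives the token infinitely many times. -/
def InfOften (T : ℕ → V) : Prop :=
  ∀ i : V, ∀ t : ℕ, ∃ t' : ℕ, t < t' ∧ T t' = i

end LD


namespace IRDEx

open LD

/-- Rank of alternatives for each voter (lower = better):
voter `i` ranks `i+1 > i+3 > i > none > i+2`. -/
def rk : Fin 4 → Option (Fin 4) → Fin 5 :=
  fun i o => o.elim 3 (fun j => ![2, 0, 4, 1] (j - i))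

/-- The preference profile. -/
abbrev pref4 (i : Fin 4) (a b : Option (Fin 4)) : Prop := rk i a < rk i b

instance (i j : Fin 4) : Decidable (Acc pref4 i j) :=
  decidable_of_iff (j ≠ i ∧ pref4 i (some j) (some i) ∧ pref4 i (some j) none) Iff.rfl

/-- The nine delegation states of the dynamics (state 0 is the start `id`,
states 1–8 form the cycle). -/
def D : Fin 9 → Fin 4 → Option (Fin 4) :=
  ![![some 0, some 1, some 2, some 3],
    ![some 1, some 1, some 2, some 3],
    ![some 1, some 2, some 2, some 3],
    ![some 0, some 2, some 2, some 3],
    ![some 0, some 2, some 3, some 3],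
    ![some 0, some 1, some 3, some 3],
    ![some 0, some 1, some 3, some 0],
    ![some 0, some 1, some 2, some 0],
    ![some 1, some 1, some 2, some 0]]

/-- The voter moving from state `k`. -/
def mov : Fin 9 → Fin 4 := ![0, 1, 0, 2, 1, 3, 2, 0, 3]

/-- Successor state index. -/
def nxt : Fin 9 → Fin 9 := ![1, 2, 3, 4, 5, 6, 7, 8, 1]

/-- Position in the state sequence at time `t`. -/
def pos (t : ℕ) : Fin 9 := nxt^[t] 0

lemma pos_succ (t : ℕ) : pos (t + 1) = nxt (pos t) :=
  Function.iterate_succ_apply' nxt t 0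

lemma pos_period (t : ℕ) : pos (t + 1 + 8) = pos (t + 1) := by
  have h1 : ∀ k : Fin 9, nxt^[8] (nxt k) = nxt k := by decide
  calc pos (t + 1 + 8) = nxt^[8] (pos (t + 1)) := by
        rw [show t + 1 + 8 = 8 + (t + 1) from by omega]
        exact Function.iterate_add_apply nxt 8 (t + 1) 0
    _ = nxt^[8] (nxt (pos t)) := by rw [pos_succ]
    _ = nxt (pos t) := h1 _
    _ = pos (t + 1) := (pos_succ t).symm

lemma pos_add_mul (p k : ℕ) : pos (p + 1 + 8 * k) = pos (p + 1) := by
  induction k with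
  | zero => simp
  | succ k ih =>
      rw [show p + 1 + 8 * (k + 1) = (p + 8 * k) + 1 + 8 from by omega, pos_period,
        show p + 8 * k + 1 = p + 1 + 8 * k from by omega, ih]

lemma hit (i : Fin 4) (t : ℕ) : ∃ t', t < t' ∧ mov (pos (t' - 1)) = i := by
  obtain ⟨p, hp⟩ : ∃ p : ℕ, mov (pos (p + 1)) = i := by
    fin_cases i
    exacts [⟨1, by decide⟩, ⟨0, by decide⟩, ⟨2, by decide⟩, ⟨4, by decide⟩]
  refine ⟨p + 2 + 8 * (t + 1), by omega, ?_⟩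
  have h : p + 2 + 8 * (t + 1) - 1 = p + 1 + 8 * (t + 1) := by omega
  rw [h, pos_add_mul, hp]

lemma step_ok : ∀ k : Fin 9, ImprovedResponse pref4 (D k) (mov k) (D (nxt k)) := by
  unfold ImprovedResponse
  decide

end IRDEx

open LD in
/-- an improved-response dynamics need not converge under
symmetrical preferences. There exist a symmetrical preference profile on 4
voters — one may take `Acc 0 = Acc 2 = {1,3}` and `Acc 1 = Acc 3 = {0,2}`
(voters `1,2,3,4` of the paper are `0,1,2,3` here), with every voter preferring
to vote rather than to abstain — a token function giving the token to every
voter infinitely often, and an improved-response dynamics starting from the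
delegation function in which every voter votes, that does not converge. -/
theorem ird_nonconvergence_example :
    ∃ pref : Fin 4 → Option (Fin 4) → Option (Fin 4) → Prop,
      IsProfile pref ∧
      (∀ i j : Fin 4, Acc pref i j ↔ Acc pref j i) ∧
      (∀ j : Fin 4,
        (Acc pref 0 j ↔ (j = 1 ∨ j = 3)) ∧ (Acc pref 2 j ↔ (j = 1 ∨ j = 3)) ∧
        (Acc pref 1 j ↔ (j = 0 ∨ j = 2)) ∧ (Acc pref 3 j ↔ (j = 0 ∨ j = 2))) ∧
      (∀ i : Fin 4, pref i (some i) none) ∧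
      ∃ T : ℕ → Fin 4, InfOften T ∧
        ∃ d : ℕ → Fin 4 → Option (Fin 4),
          (∀ i : Fin 4, d 0 i = some i) ∧
          (∀ t : ℕ, ImprovedResponse pref (d t) (T (t + 1)) (d (t + 1))) ∧
          ¬ ∃ t0 : ℕ, ∀ t : ℕ, t0 ≤ t → d t = d t0 := by

  refine ⟨IRDEx.pref4, ?_, by decide, by decide, by decide,
    fun s => IRDEx.mov (IRDEx.pos (s - 1)), ?_, fun t => IRDEx.D (IRDEx.pos t),
    by decide, ?_, ?_⟩
  · intro i
    fin_cases i <;>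
      exact { trichotomous := by decide, irrefl := by decide, trans := by decide }
  · exact fun i t => IRDEx.hit i t
  · intro t
    show ImprovedResponse IRDEx.pref4 (IRDEx.D (IRDEx.pos t))
      (IRDEx.mov (IRDEx.pos t)) (IRDEx.D (IRDEx.pos (t + 1)))
    rw [IRDEx.pos_succ]
    exact IRDEx.step_ok (IRDEx.pos t)
  · rintro ⟨t0, h⟩
    have ha : IRDEx.D (IRDEx.pos (0 + 1 + 8 * t0)) = IRDEx.D (IRDEx.pos t0) :=
      h _ (by omega)
    have hb : IRDEx.D (IRDEx.pos (1 + 1 + 8 * t0)) = IRDEx.D (IRDEx.pos t0) :=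
      h _ (by omega)
    rw [IRDEx.pos_add_mul] at ha hb
    have hc : IRDEx.D (IRDEx.pos (0 + 1)) = IRDEx.D (IRDEx.pos (1 + 1)) :=
      ha.trans hb.symm
    exact absurd (congrFun hc 1) (by decide)
end

section
/- Let P be a distance-based preference profile: there is a symmetric function dist with dist(i,j)=dist(j,i) and thresholds θ_i such that Acc(i) = {j ≠ i : dist(i,j) ≤ θ_i} for every voter i. Then every best-response dynamics converges: for every starting delegation function d_0 and every token function T in which each voter receives the token infinitely often, there exists t* such that d_t = d_{t*} for all t ≥ t*, and d_{t*} is Nash-stable. -/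
namespace LDProof
open LD

variable {V : Type*} [DecidableEq V] [Fintype V]

/-- One delegation step on `Option V`. -/
def step (d : V → Option V) (o : Option V) : Option V := o.bind d

lemma step_some {d : V → Option V} {i j : V} (h : d i = some j) :
    step d (some i) = some j := by simp [step, h]

lemma step_iter_none (d : V → Option V) (m : ℕ) : (step d)^[m] none = none := by
  induction m with
  | zero => rfl
  | succ m ih => rw [Function.iterate_succ_apply]; simpa [step] using ih

/-- `j` is reachable from `i` by following delegations (including `i` itself). -/
def reaches (d : V → Option V) (i j : V) : Prop :=
  ∃ m : ℕ, (step d)^[m] (some i) = some j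

/-- `j` is reachable from `i` in at least one step. -/
def reaches1 (d : V → Option V) (i j : V) : Prop :=
  ∃ m : ℕ, (step d)^[m + 1] (some i) = some j

lemma reaches_refl (d : V → Option V) (i : V) : reaches d i i := ⟨0, rfl⟩

lemma reaches_trans {d : V → Option V} {i j k : V}
    (h1 : reaches d i j) (h2 : reaches d j k) : reaches d i k := by
  obtain ⟨m1, hm1⟩ := h1; obtain ⟨m2, hm2⟩ := h2
  exact ⟨m2 + m1, by rw [Function.iterate_add_apply, hm1, hm2]⟩

lemma reaches_cons {d : V → Option V} {i j x : V} (h : d i = some j)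
    (hr : reaches d j x) : reaches d i x := by
  obtain ⟨m, hm⟩ := hr
  exact ⟨m + 1, by rw [Function.iterate_succ_apply, step_some h, hm]⟩

lemma reaches1.to_reaches {d : V → Option V} {i j : V} (h : reaches1 d i j) :
    reaches d i j := by obtain ⟨m, hm⟩ := h; exact ⟨m + 1, hm⟩

lemma reaches1_of_ne {d : V → Option V} {i j : V} (h : reaches d i j) (hne : i ≠ j) :
    reaches1 d i j := by
  obtain ⟨m, hm⟩ := h
  cases m with
  | zero => simp at hm; exact absurd hm hne
  | succ m => exact ⟨m, hm⟩

lemma reaches1_trans_right {d : V → Option V} {i j k : V}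
    (h1 : reaches1 d i j) (h2 : reaches d j k) : reaches1 d i k := by
  obtain ⟨m1, hm1⟩ := h1; obtain ⟨m2, hm2⟩ := h2
  exact ⟨m2 + m1, by rw [show m2 + m1 + 1 = m2 + (m1 + 1) by omega,
    Function.iterate_add_apply, hm1, hm2]⟩

lemma guIter_succ (d : V → Option V) (k : ℕ) (i : V) :
    guIter d (k + 1) i =
      match d i with
      | none => none
      | some j => if j = i then some i else guIter d k j := rfl

lemma guIter_succ_none {d : V → Option V} {i : V} (h : d i = none) (k : ℕ) :
    guIter d (k + 1) i = none := by rw [guIter_succ, h]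

lemma guIter_succ_some {d : V → Option V} {i j : V} (h : d i = some j) (k : ℕ) :
    guIter d (k + 1) i = if j = i then some i else guIter d k j := by
  rw [guIter_succ, h]

lemma guIter_eq_some {d : V → Option V} {g : V} :
    ∀ {k : ℕ} {i : V}, guIter d k i = some g → d g = some g := by
  intro k
  induction k with
  | zero => intro i h; simp [guIter] at h
  | succ k ih =>
    intro i h
    cases hd : d i with
    | none => rw [guIter_succ_none hd] at h; exact absurd h (by simp)
    | some j =>
      rw [guIter_succ_some hd] at h
      by_cases hji : j = i
      · simp [hji] at h; subst hji; rwa [← h]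
      · rw [if_neg hji] at h; exact ih h

lemma guIter_mono {d : V → Option V} {g : V} :
    ∀ {k : ℕ} {i : V}, guIter d k i = some g → guIter d (k + 1) i = some g := by
  intro k
  induction k with
  | zero => intro i h; simp [guIter] at h
  | succ k ih =>
    intro i h
    cases hd : d i with
    | none => rw [guIter_succ_none hd] at h; exact absurd h (by simp)
    | some j =>
      rw [guIter_succ_some hd] at h
      rw [guIter_succ_some hd]
      by_cases hji : j = i
      · simpa [hji] using h
      · rw [if_neg hji] at h ⊢; exact ih h

lemma guIter_reaches {d : V → Option V} {g : V} :
    ∀ {k : ℕ} {i : V}, guIter d k i = some g → reaches d i g := by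
  intro k
  induction k with
  | zero => intro i h; simp [guIter] at h
  | succ k ih =>
    intro i h
    cases hd : d i with
    | none => rw [guIter_succ_none hd] at h; exact absurd h (by simp)
    | some j =>
      rw [guIter_succ_some hd] at h
      by_cases hji : j = i
      · simp [hji] at h; exact h ▸ reaches_refl d i
      · rw [if_neg hji] at h; exact reaches_cons hd (ih h)

lemma gu_of_self {d : V → Option V} {i : V} (h : d i = some i) : gu d i = some i := by
  rw [gu, guIter_succ_some h, if_pos rfl]

lemma gu_of_none {d : V → Option V} {i : V} (h : d i = none) : gu d i = none := by
  rw [gu, guIter_succ_none h]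

lemma gu_self_iff {d : V → Option V} {i : V} : gu d i = some i ↔ d i = some i :=
  ⟨fun h => guIter_eq_some (k := Fintype.card V + 1) h, gu_of_self⟩

lemma gu_guru {d : V → Option V} {i g : V} (h : gu d i = some g) : d g = some g :=
  guIter_eq_some (k := Fintype.card V + 1) h

lemma gu_reaches {d : V → Option V} {i g : V} (h : gu d i = some g) : reaches d i g :=
  guIter_reaches (k := Fintype.card V + 1) h

lemma gu_step {d : V → Option V} {i j g : V} (hg : gu d i = some g)
    (hd : d i = some j) : gu d j = some g := by
  by_cases hji : j = i
  · rwa [hji]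
  · rw [gu, guIter_succ_some hd, if_neg hji] at hg
    exact guIter_mono hg

lemma gu_reaches_eq {d : V → Option V} {g : V} {i j : V}
    (h : reaches d i j) (hg : gu d i = some g) : gu d j = some g := by
  obtain ⟨m, hm⟩ := h
  induction m generalizing i with
  | zero => simp at hm; rwa [← hm]
  | succ m ih =>
    rw [Function.iterate_succ_apply] at hm
    cases hd : d i with
    | none => rw [show step d (some i) = none by simp [step, hd], step_iter_none] at hm; simp at hm
    | some i' =>
      rw [step_some hd] at hm
      exact ih (gu_step hg hd) hm

end LDProof
namespace LDProof
open LD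

variable {V : Type*} [DecidableEq V] [Fintype V]

/-- Localization: iterates only depend on values of `d` along the reach set. -/
lemma iter_congr {d d' : V → Option V} :
    ∀ (m : ℕ) (i : V), (∀ x, reaches d i x → d' x = d x) →
      (step d')^[m] (some i) = (step d)^[m] (some i) := by
  intro m
  induction m with
  | zero => intro i _; rfl
  | succ m ih =>
    intro i h
    rw [Function.iterate_succ_apply, Function.iterate_succ_apply]
    have hdi : d' i = d i := h i (reaches_refl d i)
    cases hd : d i with
    | none =>
      rw [show step d' (some i) = none by simp [step, hdi, hd],
        show step d (some i) = none by simp [step, hd], step_iter_none, step_iter_none]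
    | some j =>
      rw [step_some (hdi.trans hd), step_some hd]
      exact ih j (fun x hx => h x (reaches_cons hd hx))

lemma reaches_congr {d d' : V → Option V} {i : V}
    (h : ∀ x, reaches d i x → d' x = d x) (j : V) :
    reaches d' i j ↔ reaches d i j := by
  constructor <;> rintro ⟨m, hm⟩ <;> exact ⟨m, by rw [← hm, iter_congr m i h]⟩

lemma reaches1_congr {d d' : V → Option V} {i : V}
    (h : ∀ x, reaches d i x → d' x = d x) (j : V) :
    reaches1 d' i j ↔ reaches1 d i j := by
  constructor <;> rintro ⟨m, hm⟩ <;> exact ⟨m, by rw [← hm, iter_congr (m + 1) i h]⟩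

lemma guIter_congr {d d' : V → Option V} :
    ∀ (k : ℕ) (i : V), (∀ x, reaches d i x → d' x = d x) →
      guIter d' k i = guIter d k i := by
  intro k
  induction k with
  | zero => intro i _; rfl
  | succ k ih =>
    intro i h
    have hdi : d' i = d i := h i (reaches_refl d i)
    cases hd : d i with
    | none => rw [guIter_succ_none hd, guIter_succ_none (hdi.trans hd)]
    | some j =>
      rw [guIter_succ_some hd, guIter_succ_some (hdi.trans hd)]
      by_cases hji : j = i
      · rw [if_pos hji, if_pos hji]
      · rw [if_neg hji, if_neg hji]
        exact ih j (fun x hx => h x (reaches_cons hd hx))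

lemma gu_congr {d d' : V → Option V} {i : V}
    (h : ∀ x, reaches d i x → d' x = d x) : gu d' i = gu d i :=
  guIter_congr _ i h

/-- Localization across an update at `m`, when `m` is not reached from `x` (in the base `d`). -/
lemma update_loc_base {d : V → Option V} {m : V} {c : Option V} {x : V}
    (h : ¬ reaches d x m) :
    gu (Function.update d m c) x = gu d x ∧
      (∀ j, reaches (Function.update d m c) x j ↔ reaches d x j) ∧
      (∀ j, reaches1 (Function.update d m c) x j ↔ reaches1 d x j) := by
  have key : ∀ z, reaches d x z → Function.update d m c z = d z := by
    intro z hz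
    have : z ≠ m := fun e => h (e ▸ hz)
    exact Function.update_of_ne this _ _
  exact ⟨gu_congr key, reaches_congr key, reaches1_congr key⟩

/-- Localization across an update at `m`, when `m` is not reached from `x` in the
updated function. -/
lemma update_loc_new {d : V → Option V} {m : V} {c : Option V} {x : V}
    (h : ¬ reaches (Function.update d m c) x m) :
    gu (Function.update d m c) x = gu d x ∧
      (∀ j, reaches (Function.update d m c) x j ↔ reaches d x j) ∧
      (∀ j, reaches1 (Function.update d m c) x j ↔ reaches1 d x j) := by
  have key : ∀ z, reaches (Function.update d m c) x z → d z = Function.update d m c z := by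
    intro z hz
    have : z ≠ m := fun e => h (e ▸ hz)
    exact (Function.update_of_ne this _ _).symm
  exact ⟨(gu_congr key).symm, fun j => (reaches_congr key j).symm, fun j => (reaches1_congr key j).symm⟩

lemma selfloop_iter {d : V → Option V} {g : V} (hg : d g = some g) (q : ℕ) :
    (step d)^[q] (some g) = some g := by
  induction q with
  | zero => rfl
  | succ q ih => rw [Function.iterate_succ_apply, step_some hg, ih]

lemma cycle_mult {d : V → Option V} {w : V} {m : ℕ}
    (h : (step d)^[m] (some w) = some w) (k : ℕ) :
    (step d)^[k * m] (some w) = some w := by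
  induction k with
  | zero => simpa using rfl
  | succ k ih =>
    rw [Nat.succ_mul, Function.iterate_add_apply, h, ih]

/-- A voter lying on a delegation cycle whose guru is `g` must be `g` itself. -/
lemma cycle_guru {d : V → Option V} {w g : V} (h : reaches1 d w w)
    (hg : gu d w = some g) : w = g := by
  obtain ⟨m0, hm⟩ := h
  obtain ⟨p, hp⟩ := gu_reaches hg
  have hloop : d g = some g := gu_guru hg
  have h1 : ∀ q, (step d)^[q + p] (some w) = some g := by
    intro q; rw [Function.iterate_add_apply, hp, selfloop_iter hloop]
  have h2 := cycle_mult hm p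
  have h3 : (step d)^[p * (m0 + 1)] (some w) = some g := by
    rw [show p * (m0 + 1) = p * m0 + p by ring]; exact h1 (p * m0)
  rw [show p * (m0 + 1) = (m0 + 1) * p by ring] at h3 h2
  rw [h2] at h3; exact Option.some_injective _ h3

lemma gu_update_none {d : V → Option V} (i : V) :
    gu (Function.update d i none) i = none :=
  gu_of_none (Function.update_self i none d)

lemma gu_update_self {d : V → Option V} (i : V) :
    gu (Function.update d i (some i)) i = some i :=
  gu_of_self (Function.update_self i (some i) d)

lemma gu_update_guru {d : V → Option V} {i g : V} (hg : d g = some g) (hne : g ≠ i) :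
    gu (Function.update d i (some g)) i = some g := by
  have h1 : Function.update d i (some g) i = some g := Function.update_self i (some g) d
  rw [gu, guIter_succ_some h1, if_neg hne]
  have hpos : 0 < Fintype.card V := Fintype.card_pos_iff.mpr ⟨i⟩
  obtain ⟨M, hM⟩ := Nat.exists_eq_succ_of_ne_zero (Nat.pos_iff_ne_zero.mp hpos)
  rw [hM]
  have h2 : Function.update d i (some g) g = some g := by
    rw [Function.update_of_ne hne]; exact hg
  rw [guIter_succ_some h2, if_pos rfl]

lemma gu_update_cases {d : V → Option V} (i : V) (c : Option V) :
    gu (Function.update d i c) i = none ∨ gu (Function.update d i c) i = some i ∨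
      ∃ g, d g = some g ∧ g ≠ i ∧ gu (Function.update d i c) i = some g := by
  cases h : gu (Function.update d i c) i with
  | none => exact Or.inl rfl
  | some v =>
    by_cases hvi : v = i
    · exact Or.inr (Or.inl (by rw [hvi]))
    · refine Or.inr (Or.inr ⟨v, ?_, hvi, rfl⟩)
      have := gu_guru h
      rwa [Function.update_of_ne hvi] at this

end LDProof
namespace LDProof
open LD

set_option linter.unusedSectionVars false

variable {V : Type*} [DecidableEq V] [Fintype V]

section Order

variable {pref : V → Option V → Option V → Prop} (hP : IsProfile pref)

include hP

lemma pref_trans {i : V} {a b c : Option V} (h1 : pref i a b) (h2 : pref i b c) :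
    pref i a c := by
  haveI := hP i
  exact trans_of (pref i) h1 h2

lemma pref_asymm {i : V} {a b : Option V} (h1 : pref i a b) (h2 : pref i b a) : False := by
  haveI := hP i
  exact irrefl_of (pref i) a (trans_of (pref i) h1 h2)

lemma pref_trichotomy (i : V) (a b : Option V) : pref i a b ∨ a = b ∨ pref i b a := by
  haveI := hP i
  exact trichotomous_of (pref i) a b

end Order

section Dynamics

variable {pref : V → Option V → Option V → Prop} {d : ℕ → V → Option V} {T : ℕ → V}

variable (hBR : ∀ t : ℕ, BestResponse pref (d t) (T (t + 1)) (d (t + 1)))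

include hBR

lemma br_nontoken (t : ℕ) {j : V} (h : j ≠ T (t + 1)) : d (t + 1) j = d t j :=
  (hBR t).1 j h

lemma br_update (t : ℕ) :
    d (t + 1) = Function.update (d t) (T (t + 1)) (d (t + 1) (T (t + 1))) := by
  funext j
  by_cases hj : j = T (t + 1)
  · subst hj; rw [Function.update_self]
  · rw [Function.update_of_ne hj]; exact (hBR t).1 j hj

lemma br_pref (t : ℕ) (c : Option V)
    (h : gu (Function.update (d t) (T (t + 1)) c) (T (t + 1)) ≠ gu (d (t + 1)) (T (t + 1))) :
    pref (T (t + 1)) (gu (d (t + 1)) (T (t + 1)))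
      (gu (Function.update (d t) (T (t + 1)) c) (T (t + 1))) :=
  (hBR t).2.1 c h

lemma br_stay (t : ℕ) (h : gu (d (t + 1)) (T (t + 1)) = gu (d t) (T (t + 1))) :
    d (t + 1) = d t := by
  funext j
  by_cases hj : j = T (t + 1)
  · subst hj; exact (hBR t).2.2 h
  · exact (hBR t).1 j hj

/-- The guru of the token holder after her best response, as an element of the
achievable set (classification). -/
lemma br_gu_cases (t : ℕ) :
    gu (d (t + 1)) (T (t + 1)) = none ∨ gu (d (t + 1)) (T (t + 1)) = some (T (t + 1)) ∨
      ∃ g, d t g = some g ∧ g ≠ T (t + 1) ∧ gu (d (t + 1)) (T (t + 1)) = some g := by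
  rw [br_update hBR t]
  exact gu_update_cases (T (t + 1)) (d (t + 1) (T (t + 1)))

/-- Characterization of when the token holder becomes (or stays) a guru. -/
lemma br_self_iff (hP : IsProfile pref) (t : ℕ) :
    d (t + 1) (T (t + 1)) = some (T (t + 1)) ↔
      (pref (T (t + 1)) (some (T (t + 1))) none ∧
        ∀ g, d t g = some g → g ≠ T (t + 1) → ¬ Acc pref (T (t + 1)) g) := by
  set i := T (t + 1) with hi
  constructor
  · intro h
    have hgu : gu (d (t + 1)) i = some i := gu_of_self h
    constructor
    · have hc := br_pref hBR t none
      rw [gu_update_none, hgu] at hc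
      exact hc (by simp)
    · intro g hg hgi hacc
      have hc := br_pref hBR t (some g)
      rw [gu_update_guru hg hgi, hgu] at hc
      have hpref : pref i (some i) (some g) := hc (by simp [hgi])
      exact pref_asymm hP hacc.2.1 hpref
  · rintro ⟨hna, hng⟩
    rw [← gu_self_iff]
    by_contra hne
    have hc := br_pref hBR t (some i)
    rw [gu_update_self] at hc
    have hpref : pref i (gu (d (t + 1)) i) (some i) := hc (fun e => hne e.symm)
    rcases br_gu_cases hBR t with h0 | h0 | ⟨g, hg, hgi, h0⟩
    · simp only [hi] at hpref
      rw [h0] at hpref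
      rw [hi] at hna
      exact pref_asymm hP hna hpref
    · exact hne h0
    · simp only [hi] at hpref
      rw [h0] at hpref
      rw [hi] at hna hng
      -- `pref i (some g) (some i)`; show `Acc` fails only on the `none` comparison
      have hnacc := hng g hg hgi
      have : ¬ pref (T (t + 1)) (some g) none := fun hn => hnacc ⟨hgi, hpref, hn⟩
      rcases pref_trichotomy hP (T (t + 1)) (some g) none with h1 | h1 | h1
      · exact this h1
      · simp at h1
      · exact pref_asymm hP hpref (pref_trans hP hna h1)

end Dynamics

end LDProof
namespace LDProof
open LD

set_option linter.unusedSectionVars false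

section Helpers

variable {V : Type*} [Fintype V]

lemma sets_stabilize_of_antitone {α : Type*} [Finite α] (S : ℕ → Set α)
    (h : ∀ t, S (t + 1) ⊆ S t) : ∃ a, ∀ t, a ≤ t → S t = S a := by
  have hmono : ∀ a b, a ≤ b → S b ⊆ S a := by
    intro a b hab
    induction b, hab using Nat.le_induction with
    | base => exact fun _ hx => hx
    | succ b hab ih => exact fun x hx => ih (h b hx)
  set f : ℕ → ℕ := fun t => (S t).ncard with hf
  have hne : (Set.range f).Nonempty := ⟨f 0, ⟨0, rfl⟩⟩
  obtain ⟨a, ha⟩ := Nat.sInf_mem hne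
  refine ⟨a, fun t ht => ?_⟩
  have hsub : S t ⊆ S a := hmono a t ht
  have hle : f a ≤ f t := by
    rw [ha]; exact Nat.sInf_le ⟨t, rfl⟩
  exact Set.eq_of_subset_of_ncard_le hsub hle (Set.toFinite _)

lemma sets_stabilize_of_monotone {α : Type*} [Finite α] (S : ℕ → Set α)
    (h : ∀ t, S t ⊆ S (t + 1)) : ∃ a, ∀ t, a ≤ t → S t = S a := by
  have hmono : ∀ a b, a ≤ b → S a ⊆ S b := by
    intro a b hab
    induction b, hab using Nat.le_induction with
    | base => exact fun _ hx => hx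
    | succ b hab ih => exact fun x hx => h b (ih hx)
  set f : ℕ → ℕ := fun t => (Set.univ \ S t).ncard with hf
  have hne : (Set.range f).Nonempty := ⟨f 0, ⟨0, rfl⟩⟩
  obtain ⟨a, ha⟩ := Nat.sInf_mem hne
  refine ⟨a, fun t ht => ?_⟩
  have hsub : Set.univ \ S t ⊆ Set.univ \ S a := fun x hx =>
    ⟨trivial, fun hxa => hx.2 (hmono a t ht hxa)⟩
  have hle : f a ≤ f t := by
    rw [ha]; exact Nat.sInf_le ⟨t, rfl⟩
  have heq : Set.univ \ S t = Set.univ \ S a :=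
    Set.eq_of_subset_of_ncard_le hsub hle (Set.toFinite _)
  ext x
  constructor
  · intro hx
    by_contra hxa
    have : x ∈ Set.univ \ S a := ⟨trivial, hxa⟩
    rw [← heq] at this
    exact this.2 hx
  · intro hx
    by_contra hxt
    have : x ∈ Set.univ \ S t := ⟨trivial, hxt⟩
    rw [heq] at this
    exact this.2 hx

lemma exists_flip {Q : ℕ → Prop} {a b : ℕ} (ha : Q a) (hb : ¬ Q b) (hab : a ≤ b) :
    ∃ t, a ≤ t ∧ Q t ∧ ¬ Q (t + 1) := by
  by_contra hno
  push_neg at hno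
  have : ∀ t, a ≤ t → Q t := by
    intro t ht
    induction t, ht using Nat.le_induction with
    | base => exact ha
    | succ t ht ih => exact hno t ht ih
  exact hb (this b hab)

lemma unbounded_pigeonhole {V : Type*} [Fintype V] {P : V → ℕ → Prop}
    (h : ∀ u, ∃ t, u ≤ t ∧ ∃ x, P x t) : ∃ x, ∀ u, ∃ t, u ≤ t ∧ P x t := by
  by_contra hno
  push_neg at hno
  choose u hu using hno
  classical
  obtain ⟨t, ht, x, hx⟩ := h (Finset.univ.sup u)
  exact hu x t (le_trans (Finset.le_sup (Finset.mem_univ x)) ht) hx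

/-- From a non-eventually-constant `ℕ`-indexed proposition, extract unbounded
true-to-false and false-to-true flips. -/
lemma flips_unbounded {M : ℕ → Prop}
    (h : ∀ u, ∃ t, u ≤ t ∧ ¬ (M t ↔ M u)) :
    (∀ u, ∃ t, u ≤ t ∧ M t ∧ ¬ M (t + 1)) ∧ (∀ u, ∃ t, u ≤ t ∧ ¬ M t ∧ M (t + 1)) := by
  classical
  have hMub : ∀ u, ∃ t, u ≤ t ∧ M t := by
    intro u
    by_cases hMu : M u
    · exact ⟨u, le_refl u, hMu⟩
    · obtain ⟨t, ht, hiff⟩ := h u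
      refine ⟨t, ht, ?_⟩
      by_contra hMt
      exact hiff ⟨fun x => absurd x hMt, fun x => absurd x hMu⟩
  have hNub : ∀ u, ∃ t, u ≤ t ∧ ¬ M t := by
    intro u
    by_cases hMu : M u
    · obtain ⟨t, ht, hiff⟩ := h u
      refine ⟨t, ht, ?_⟩
      by_contra hMt
      exact hiff ⟨fun _ => hMu, fun _ => hMt⟩
    · exact ⟨u, le_refl u, hMu⟩
  constructor
  · intro u
    obtain ⟨a, hua, hMa⟩ := hMub u
    obtain ⟨b, hab, hMb⟩ := hNub a
    obtain ⟨t, hat, ht⟩ := exists_flip hMa hMb hab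
    exact ⟨t, le_trans hua hat, ht⟩
  · intro u
    obtain ⟨a, hua, hMa⟩ := hNub u
    obtain ⟨b, hab, hMb⟩ := hMub a
    obtain ⟨t, hat, ht1, ht2⟩ := exists_flip (Q := fun t => ¬ M t) hMa (not_not.mpr hMb) hab
    exact ⟨t, le_trans hua hat, ht1, not_not.mp ht2⟩

end Helpers

end LDProof
namespace LDProof
open LD

set_option linter.unusedSectionVars false
set_option maxHeartbeats 1000000

variable {V : Type*} [DecidableEq V] [Fintype V]

/-- **Phase 1**: the set of gurus eventually stabilizes. -/
lemma gurus_stabilize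
    {pref : V → Option V → Option V → Prop} (hP : IsProfile pref)
    (dist : V → V → ℝ) (hsym : ∀ i j : V, dist i j = dist j i) (θ : V → ℝ)
    (hAcc : ∀ i j : V, Acc pref i j ↔ (j ≠ i ∧ dist i j ≤ θ i))
    {d : ℕ → V → Option V} {T : ℕ → V} (hT : InfOften T)
    (hBR : ∀ t : ℕ, BestResponse pref (d t) (T (t + 1)) (d (t + 1))) :
    ∃ t₂ : ℕ, ∀ t, t₂ ≤ t → ∀ i, (d t i = some i ↔ d t₂ i = some i) := by
  classical
  -- the set of mutually-accepting pairs of gurus is antitone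
  set Pset : ℕ → Set (V × V) := fun t =>
    {p | d t p.1 = some p.1 ∧ d t p.2 = some p.2 ∧ Acc pref p.1 p.2 ∧ Acc pref p.2 p.1}
    with hPset
  have hPanti : ∀ t, Pset (t + 1) ⊆ Pset t := by
    rintro t ⟨a, b⟩ ⟨ha, hb, hab, hba⟩
    by_cases hai : a = T (t + 1)
    · exfalso
      subst hai
      obtain ⟨hna, hng⟩ := (br_self_iff hBR hP t).mp ha
      have hbne : b ≠ T (t + 1) := hab.1
      have hbt : d t b = some b := by rw [← br_nontoken hBR t hbne]; exact hb
      exact hng b hbt hbne hab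
    · by_cases hbi : b = T (t + 1)
      · exfalso
        subst hbi
        obtain ⟨hna, hng⟩ := (br_self_iff hBR hP t).mp hb
        have hane : a ≠ T (t + 1) := hba.1
        have hat : d t a = some a := by rw [← br_nontoken hBR t hane]; exact ha
        exact hng a hat hane hba
      · exact ⟨by rw [← br_nontoken hBR t hai]; exact ha,
          by rw [← br_nontoken hBR t hbi]; exact hb, hab, hba⟩
  obtain ⟨t₁, hP1⟩ := sets_stabilize_of_antitone Pset hPanti
  -- membership of each voter is eventually constant
  have hEvC : ∀ i : V, ∃ u, ∀ t, u ≤ t → (d t i = some i ↔ d u i = some i) := by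
    by_contra hno
    rw [not_forall] at hno
    obtain ⟨i₀, hi₀⟩ := hno
    set S : Finset V :=
      Finset.univ.filter (fun i => ¬ ∃ u, ∀ t, u ≤ t → (d t i = some i ↔ d u i = some i))
      with hS
    have hSne : S.Nonempty := ⟨i₀, Finset.mem_filter.mpr ⟨Finset.mem_univ _, hi₀⟩⟩
    obtain ⟨iS, hiS, hmin⟩ := Finset.exists_min_image S θ hSne
    have hNEvC : ¬ ∃ u, ∀ t, u ≤ t → (d t iS = some iS ↔ d u iS = some iS) :=
      (Finset.mem_filter.mp hiS).2
    have hflip : ∀ u, ∃ t, u ≤ t ∧ ¬ ((d t iS = some iS) ↔ (d u iS = some iS)) := by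
      intro u
      by_contra hc
      push_neg at hc
      refine hNEvC ⟨u, fun t ht => ?_⟩
      rcases hc t ht with h
      constructor
      · exact h.1
      · exact h.2
    obtain ⟨hleaves, henters⟩ := flips_unbounded hflip
    have htok : ∀ t, ¬ (d t iS = d (t + 1) iS) → T (t + 1) = iS := by
      intro t h
      by_contra hne
      exact h (br_nontoken hBR t (fun e => hne e.symm)).symm
    -- `iS` is not an abstainer
    have hna : pref iS (some iS) none := by
      obtain ⟨t, _, hn, hy⟩ := henters 0
      have htk : T (t + 1) = iS := htok t (fun e => hn (e ▸ hy))
      have hy' : d (t + 1) (T (t + 1)) = some (T (t + 1)) := by rw [htk]; exact hy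
      have := ((br_self_iff hBR hP t).mp hy').1
      rwa [htk] at this
    -- leaves produce acceptable gurus
    have hug : ∀ u, ∃ t, u ≤ t ∧ ∃ g,
        (d t iS = some iS ∧ ¬ d (t + 1) iS = some iS ∧
          d t g = some g ∧ g ≠ iS ∧ Acc pref iS g) := by
      intro u
      obtain ⟨t, hut, hy, hn⟩ := hleaves u
      have htk : T (t + 1) = iS := htok t (fun e => hn (e ▸ hy))
      refine ⟨t, hut, ?_⟩
      have hnotiff : ¬ d (t + 1) (T (t + 1)) = some (T (t + 1)) := by rw [htk]; exact hn
      have hnr := (br_self_iff hBR hP t).not.mp hnotiff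
      rw [htk] at hnr
      push_neg at hnr
      obtain ⟨g, hg1, hg2, hg3⟩ := hnr hna
      exact ⟨g, hy, hn, hg1, hg2, hg3⟩
    obtain ⟨gS, hgS⟩ := unbounded_pigeonhole (P := fun g t =>
      d t iS = some iS ∧ ¬ d (t + 1) iS = some iS ∧
        d t g = some g ∧ g ≠ iS ∧ Acc pref iS g) hug
    obtain ⟨ta, _, _, _, _, hgne0, hacc0⟩ := hgS 0
    -- the acceptance cannot be mutual (the pair would leave the stable pair set)
    have hnmut : ¬ Acc pref gS iS := by
      intro haccm
      obtain ⟨t, ht1, hmem, hleave, hgmem, hgne, hacci⟩ := hgS t₁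
      have hp1 : (iS, gS) ∈ Pset t := ⟨hmem, hgmem, hacci, haccm⟩
      have hp2 : (iS, gS) ∉ Pset (t + 1) := fun hp => hleave hp.1
      rw [hP1 t ht1] at hp1
      rw [hP1 (t + 1) (le_trans ht1 (Nat.le_succ t))] at hp2
      exact hp2 hp1
    -- therefore `θ gS < θ iS`
    have hθ : θ gS < θ iS := by
      obtain ⟨hne, hdle⟩ := (hAcc iS gS).mp hacc0
      have h2 : ¬ (iS ≠ gS ∧ dist gS iS ≤ θ gS) := fun h => hnmut ((hAcc gS iS).mpr h)
      push_neg at h2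
      have h3 : θ gS < dist gS iS := h2 (fun e => hne e.symm)
      rw [← hsym iS gS] at h3
      exact lt_of_lt_of_le h3 hdle
    -- `gS` is eventually constant, and in fact eventually always a guru
    have hgnotS : gS ∉ S := fun hin => absurd (hmin gS hin) (not_le.mpr hθ)
    have hEg : ∃ u, ∀ t, u ≤ t → (d t gS = some gS ↔ d u gS = some gS) := by
      by_contra hc
      exact hgnotS (Finset.mem_filter.mpr ⟨Finset.mem_univ _, hc⟩)
    obtain ⟨ug, hug2⟩ := hEg
    have hgin : ∀ t, ug ≤ t → d t gS = some gS := by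
      obtain ⟨t, htu, _, _, hgmem, _, _⟩ := hgS ug
      have hbase : d ug gS = some gS := (hug2 t htu).mp hgmem
      intro t' ht'
      exact (hug2 t' ht').mpr hbase
    -- but then `iS` could never enter again
    obtain ⟨t, htu, hn, hy⟩ := henters ug
    have htk : T (t + 1) = iS := htok t (fun e => hn (e ▸ hy))
    have hy' : d (t + 1) (T (t + 1)) = some (T (t + 1)) := by rw [htk]; exact hy
    have hch := (br_self_iff hBR hP t).mp hy'
    rw [htk] at hch
    exact hch.2 gS (hgin t htu) hgne0 hacc0
  -- conclude
  choose u hu using hEvC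
  refine ⟨Finset.univ.sup u, fun t ht i => ?_⟩
  have hui : u i ≤ Finset.univ.sup u := Finset.le_sup (Finset.mem_univ i)
  exact (hu i t (le_trans hui ht)).trans (hu i (Finset.univ.sup u) hui).symm

end LDProof
namespace LDProof
open LD

set_option linter.unusedSectionVars false

variable {V : Type*} [DecidableEq V] [Fintype V]

/-- The set of outcomes achievable by voter `i` given the delegations `d0` of others. -/
def Bm (d0 : V → Option V) (i : V) (x : Option V) : Prop :=
  x = none ∨ x = some i ∨ ∃ g, d0 g = some g ∧ g ≠ i ∧ x = some g

/-- Recursively satisfied voters. -/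
def Rset (τ : V → Option V) (d0 : V → Option V) : Set V :=
  {x | ∀ j, reaches d0 x j → gu d0 j = τ j}

/-- Frontier voters: unsatisfied, with an actual guru, and everything they reach
is satisfied. -/
def FRset (τ : V → Option V) (d0 : V → Option V) : Set V :=
  {x | gu d0 x ≠ τ x ∧ (∃ g, gu d0 x = some g) ∧ ∀ y, reaches1 d0 x y → gu d0 y = τ y}

section Dyn

variable {pref : V → Option V → Option V → Prop} {d : ℕ → V → Option V} {T : ℕ → V}
variable (hBR : ∀ t : ℕ, BestResponse pref (d t) (T (t + 1)) (d (t + 1)))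

include hBR

lemma br_bm_mem (t : ℕ) : Bm (d t) (T (t + 1)) (gu (d (t + 1)) (T (t + 1))) :=
  br_gu_cases hBR t

lemma br_bm_max (hP : IsProfile pref) (t : ℕ) :
    ∀ y, Bm (d t) (T (t + 1)) y → y ≠ gu (d (t + 1)) (T (t + 1)) →
      pref (T (t + 1)) (gu (d (t + 1)) (T (t + 1))) y := by
  rintro y (rfl | rfl | ⟨g, hg, hgi, rfl⟩) hne
  · have h := br_pref hBR t none
    rw [gu_update_none] at h
    exact h hne
  · have h := br_pref hBR t (some (T (t + 1)))
    rw [gu_update_self] at h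
    exact h hne
  · have h := br_pref hBR t (some g)
    rw [gu_update_guru hg hgi] at h
    exact h hne

end Dyn

end LDProof
open LD in
/-- BRD converges for distance-based profiles.
Let `P` be a distance-based preference profile: there are a symmetric function
`dist` and thresholds `θ` such that `Acc i = {j ≠ i : dist i j ≤ θ i}` for
every voter `i`. Then every best-response dynamics (with every voter receiving
the token infinitely often) converges, and the reached delegation function is
Nash-stable. -/
theorem distance_based_brd_converges {V : Type*} [DecidableEq V] [Fintype V]
    (pref : V → Option V → Option V → Prop) (hP : IsProfile pref)
    (dist : V → V → ℝ) (hsym : ∀ i j : V, dist i j = dist j i) (θ : V → ℝ)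
    (hAcc : ∀ i j : V, Acc pref i j ↔ (j ≠ i ∧ dist i j ≤ θ i))
    (d : ℕ → V → Option V) (T : ℕ → V) (hT : InfOften T)
    (hBR : ∀ t : ℕ, BestResponse pref (d t) (T (t + 1)) (d (t + 1))) :
    ∃ t0 : ℕ, (∀ t : ℕ, t0 ≤ t → d t = d t0) ∧ NashStable pref (d t0) := by
  classical
  open LDProof in
  -- Phase 1: the guru set stabilizes
  obtain ⟨t₂, hG⟩ := gurus_stabilize hP dist hsym θ hAcc hT hBR
  -- the achievable sets coincide at all times past `t₂`
  have hBmiff : ∀ t t', t₂ ≤ t → t₂ ≤ t' → ∀ i x, Bm (d t) i x → Bm (d t') i x := by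
    rintro t t' ht ht' i x (rfl | rfl | ⟨g, hg, hgi, rfl⟩)
    · exact Or.inl rfl
    · exact Or.inr (Or.inl rfl)
    · exact Or.inr (Or.inr ⟨g, (hG t' ht' g).mpr ((hG t ht g).mp hg), hgi, rfl⟩)
  -- fixed targets
  have hsel : ∀ i : V, ∃ s : ℕ, t₂ < s ∧ T s = i := fun i => hT i t₂
  choose s hs1 hs2 using hsel
  obtain ⟨τ, hτspec⟩ : ∃ τ : V → Option V, ∀ i, τ i = gu (d (s i)) i := ⟨_, fun i => rfl⟩
  -- uniform outcome of every best response past `t₂`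
  have hstep : ∀ t, t₂ ≤ t → gu (d (t + 1)) (T (t + 1)) = τ (T (t + 1)) := by
    intro t ht
    obtain ⟨t', ht'eq⟩ : ∃ t', s (T (t + 1)) = t' + 1 := ⟨s (T (t + 1)) - 1,
      by have := hs1 (T (t + 1)); omega⟩
    have ht'2 : t₂ ≤ t' := by have := hs1 (T (t + 1)); omega
    have hTt' : T (t' + 1) = T (t + 1) := by rw [← ht'eq]; exact hs2 (T (t + 1))
    have hτi : τ (T (t + 1)) = gu (d (t' + 1)) (T (t + 1)) := by
      rw [hτspec, ht'eq]
    have hm0 : Bm (d t) (T (t + 1)) (gu (d (t + 1)) (T (t + 1))) := br_bm_mem hBR t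
    have hx0 := br_bm_max hBR hP t
    have hm1 : Bm (d t') (T (t + 1)) (gu (d (t' + 1)) (T (t + 1))) := by
      have := br_bm_mem hBR t'
      rwa [hTt'] at this
    have hx1 := br_bm_max hBR hP t'
    rw [hTt'] at hx1
    by_contra hne
    rw [hτi] at hne
    have hp1 : pref (T (t + 1)) (gu (d (t + 1)) (T (t + 1))) (gu (d (t' + 1)) (T (t + 1))) :=
      hx0 _ (hBmiff t' t ht'2 ht _ _ hm1) (Ne.symm hne)
    have hp2 : pref (T (t + 1)) (gu (d (t' + 1)) (T (t + 1))) (gu (d (t + 1)) (T (t + 1))) :=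
      hx1 _ (hBmiff t t' ht ht'2 _ _ hm0) hne
    exact pref_asymm hP hp1 hp2
  -- gurus are permanently satisfied
  have hτguru : ∀ g, d t₂ g = some g → τ g = some g := by
    intro g hg
    rw [hτspec]
    exact gu_of_self ((hG (s g) (le_of_lt (hs1 g)) g).mpr hg)
  -- step classification
  have hstepcase : ∀ t, t₂ ≤ t → d (t + 1) = d t ∨
      (gu (d t) (T (t + 1)) ≠ τ (T (t + 1)) ∧
        gu (d (t + 1)) (T (t + 1)) = τ (T (t + 1))) := by
    intro t ht
    have h1 := hstep t ht
    by_cases h2 : gu (d t) (T (t + 1)) = τ (T (t + 1))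
    · exact Or.inl (br_stay hBR t (h1.trans h2.symm))
    · exact Or.inr ⟨h2, h1⟩
  -- `Rset` is monotone
  have hRmono : ∀ t, t₂ ≤ t → Rset τ (d t) ⊆ Rset τ (d (t + 1)) := by
    intro t ht x hx
    rcases hstepcase t ht with he | ⟨hm1, hm2⟩
    · intro j hj
      rw [he] at hj ⊢
      exact hx j hj
    · have hnr : ¬ reaches (d t) x (T (t + 1)) := fun hr => hm1 (hx _ hr)
      have hupd : d (t + 1) = Function.update (d t) (T (t + 1)) (d (t + 1) (T (t + 1))) :=
        br_update hBR t
      intro j hj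
      have hup := update_loc_base (d := d t) (c := d (t + 1) (T (t + 1))) (x := x) hnr
      rw [hupd] at hj
      have hjd : reaches (d t) x j := (hup.2.1 j).mp hj
      have hnrj : ¬ reaches (d t) j (T (t + 1)) :=
        fun hr => hm1 (hx _ (reaches_trans hjd hr))
      have hupj := update_loc_base (d := d t) (c := d (t + 1) (T (t + 1))) (x := j) hnrj
      show gu (d (t + 1)) j = τ j
      rw [hupd, hupj.1]
      exact hx j hjd
  -- `Rset` stabilizes
  obtain ⟨a₃, hRa⟩ := sets_stabilize_of_monotone (fun k => Rset τ (d (t₂ + k)))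
    (fun k => hRmono (t₂ + k) (Nat.le_add_right _ _))
  set t₃ := t₂ + a₃ with ht₃def
  have ht₂₃ : t₂ ≤ t₃ := Nat.le_add_right _ _
  have hRconst : ∀ t, t₃ ≤ t → Rset τ (d t) = Rset τ (d t₃) := by
    intro t ht
    have h1 := hRa (t - t₂) (by omega)
    rwa [show t₂ + (t - t₂) = t by omega] at h1
  -- `FRset` is antitone once `Rset` is constant
  have hFRanti : ∀ t, t₃ ≤ t → FRset τ (d (t + 1)) ⊆ FRset τ (d t) := by
    intro t ht x hx
    obtain ⟨hx1, ⟨g, hxg⟩, hx3⟩ := hx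
    rcases hstepcase t (le_trans ht₂₃ ht) with he | ⟨hm1, hm2⟩
    · rw [he] at hx1 hxg hx3
      exact ⟨hx1, ⟨g, hxg⟩, hx3⟩
    · have hupd : d (t + 1) = Function.update (d t) (T (t + 1)) (d (t + 1) (T (t + 1))) :=
        br_update hBR t
      have hxm : x ≠ T (t + 1) := fun e => hx1 (e ▸ hm2)
      by_cases hrm : reaches (d (t + 1)) x (T (t + 1))
      · exfalso
        have hmnotR : (T (t + 1)) ∉ Rset τ (d (t + 1)) := by
          rw [hRconst (t + 1) (le_trans ht (Nat.le_succ t)), ← hRconst t ht]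
          intro hm
          exact hm1 (hm _ (reaches_refl _ _))
        rw [Rset, Set.mem_setOf_eq, not_forall] at hmnotR
        obtain ⟨w, hw⟩ := hmnotR
        rw [Classical.not_imp] at hw
        obtain ⟨hw1, hw2⟩ := hw
        exact hw2 (hx3 w (reaches1_trans_right (reaches1_of_ne hrm hxm) hw1))
      · have hup := update_loc_new (d := d t) (c := d (t + 1) (T (t + 1))) (x := x)
          (by rw [← hupd]; exact hrm)
        have hgux : gu (d (t + 1)) x = gu (d t) x := by rw [hupd]; exact hup.1
        refine ⟨by rw [← hgux]; exact hx1, ⟨g, by rw [← hgux]; exact hxg⟩, ?_⟩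
        intro y hy
        have hy' : reaches1 (d (t + 1)) x y := by
          rw [hupd]; exact (hup.2.2 y).mpr hy
        have hnrym : ¬ reaches (d (t + 1)) y (T (t + 1)) :=
          fun hr => hrm (reaches_trans hy'.to_reaches hr)
        have hupy := update_loc_new (d := d t) (c := d (t + 1) (T (t + 1))) (x := y)
          (by rw [← hupd]; exact hnrym)
        have hguy : gu (d (t + 1)) y = gu (d t) y := by rw [hupd]; exact hupy.1
        rw [← hguy]
        exact hx3 y hy'
  -- `FRset` stabilizes
  obtain ⟨a₄, hFRa⟩ := sets_stabilize_of_antitone (fun k => FRset τ (d (t₃ + k)))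
    (fun k => hFRanti (t₃ + k) (Nat.le_add_right _ _))
  set t₄ := t₃ + a₄ with ht₄def
  have ht₃₄ : t₃ ≤ t₄ := Nat.le_add_right _ _
  have ht₂₄ : t₂ ≤ t₄ := le_trans ht₂₃ ht₃₄
  have hFRconst : ∀ t, t₄ ≤ t → FRset τ (d t) = FRset τ (d t₄) := by
    intro t ht
    have h1 := hFRa (t - t₃) (by omega)
    rwa [show t₃ + (t - t₃) = t by omega] at h1
  -- the frontier set is eventually empty
  have hFRempty : ∀ t, t₄ ≤ t → FRset τ (d t) = ∅ := by
    have h0 : FRset τ (d t₄) = ∅ := by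
      by_contra hne
      obtain ⟨x, hx⟩ := Set.nonempty_iff_ne_empty.mpr hne
      obtain ⟨s', hs'1, hs'2⟩ := hT x t₄
      obtain ⟨t, hteq⟩ : ∃ t, s' = t + 1 := ⟨s' - 1, by omega⟩
      have ht4 : t₄ ≤ t := by omega
      have hTt : T (t + 1) = x := by rw [← hteq]; exact hs'2
      have hx1 : x ∈ FRset τ (d (t + 1)) := by
        rw [hFRconst (t + 1) (by omega)]
        exact hx
      have hsat : gu (d (t + 1)) x = τ x := by
        have := hstep t (le_trans ht₂₄ ht4)
        rwa [hTt] at this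
      exact hx1.1 hsat
    intro t ht
    rw [hFRconst t ht, h0]
  -- existence of frontier voters
  have hFRex : ∀ t, t₂ ≤ t → ∀ u gg, gu (d t) u ≠ τ u → gu (d t) u = some gg →
      (FRset τ (d t)).Nonempty := by
    intro t ht u gg hu hug
    set F : Finset V :=
      Finset.univ.filter (fun w => reaches (d t) u w ∧ gu (d t) w ≠ τ w) with hF
    have hFne : F.Nonempty :=
      ⟨u, Finset.mem_filter.mpr ⟨Finset.mem_univ _, reaches_refl _ _, hu⟩⟩
    obtain ⟨w, hwF, hwmin⟩ := F.exists_min_image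
      (fun w => (Finset.univ.filter (fun x => reaches (d t) w x ∧ gu (d t) x ≠ τ x)).card) hFne
    obtain ⟨hwu, hwsat⟩ := (Finset.mem_filter.mp hwF).2
    have hwg : gu (d t) w = some gg := gu_reaches_eq hwu hug
    refine ⟨w, hwsat, ⟨gg, hwg⟩, ?_⟩
    intro y hy
    by_contra hysat
    have hyr : reaches (d t) w y := hy.to_reaches
    have hyF : y ∈ F :=
      Finset.mem_filter.mpr ⟨Finset.mem_univ _, reaches_trans hwu hyr, hysat⟩
    by_cases hyw : reaches (d t) y w
    · have hwgg : w = gg := cycle_guru (reaches1_trans_right hy hyw) hwg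
      have hggguru : d t gg = some gg := gu_guru hug
      have hsatgg : gu (d t) gg = τ gg := by
        rw [gu_of_self hggguru, hτguru gg ((hG t ht gg).mp hggguru)]
      exact hwsat (by rw [hwgg]; exact hsatgg)
    · have hsub : (Finset.univ.filter (fun x => reaches (d t) y x ∧ gu (d t) x ≠ τ x)) ⊂
          (Finset.univ.filter (fun x => reaches (d t) w x ∧ gu (d t) x ≠ τ x)) := by
        rw [Finset.ssubset_def]
        constructor
        · intro z hz
          obtain ⟨_, hz1, hz2⟩ := Finset.mem_filter.mp hz
          exact Finset.mem_filter.mpr ⟨Finset.mem_univ _, reaches_trans hyr hz1, hz2⟩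
        · intro hcontra
          have hwmem : w ∈ (Finset.univ.filter
              (fun x => reaches (d t) w x ∧ gu (d t) x ≠ τ x)) :=
            Finset.mem_filter.mpr ⟨Finset.mem_univ _, reaches_refl _ _, hwsat⟩
          exact hyw ((Finset.mem_filter.mp (hcontra hwmem)).2.1)
      exact absurd (hwmin y hyF) (not_le.mpr (Finset.card_lt_card hsub))
  -- no change ever happens past `t₄`
  have hnochange : ∀ t, t₄ ≤ t → d (t + 1) = d t := by
    intro t ht
    rcases hstepcase t (le_trans ht₂₄ ht) with he | ⟨hm1, hm2⟩
    · exact he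
    · exfalso
      cases hgut : gu (d t) (T (t + 1)) with
      | some gg =>
        obtain ⟨f, hf⟩ := hFRex t (le_trans ht₂₄ ht) (T (t + 1)) gg
          (by rw [hgut]; exact hgut ▸ hm1) hgut
        rw [hFRempty t ht] at hf
        exact hf
      | none =>
        have hne : τ (T (t + 1)) ≠ none := fun e => hm1 (by rw [hgut, e])
        obtain ⟨γ, hγ⟩ : ∃ γ, τ (T (t + 1)) = some γ := Option.ne_none_iff_exists'.mp hne
        have hmnotR : (T (t + 1)) ∉ Rset τ (d (t + 1)) := by
          rw [hRconst (t + 1) (by omega), ← hRconst t (le_trans ht₃₄ ht)]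
          intro hm
          exact hm1 (hm _ (reaches_refl _ _))
        rw [Rset, Set.mem_setOf_eq, not_forall] at hmnotR
        obtain ⟨w, hw⟩ := hmnotR
        rw [Classical.not_imp] at hw
        obtain ⟨hw1, hw2⟩ := hw
        have hguw : gu (d (t + 1)) w = some γ :=
          gu_reaches_eq hw1 (by rw [hm2, hγ])
        obtain ⟨f, hf⟩ := hFRex (t + 1) (by omega) w γ hw2 hguw
        rw [hFRempty (t + 1) (by omega)] at hf
        exact hf
  -- everything is constant past `t₄`
  have hconst : ∀ t, t₄ ≤ t → d t = d t₄ := by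
    intro t ht
    induction t, ht using Nat.le_induction with
    | base => rfl
    | succ t ht ih => rw [hnochange t ht, ih]
  refine ⟨t₄, hconst, ?_⟩
  -- Nash stability
  intro i g hg hne
  obtain ⟨s', hs'1, hs'2⟩ := hT i t₄
  obtain ⟨t, hteq⟩ : ∃ t, s' = t + 1 := ⟨s' - 1, by omega⟩
  have ht4 : t₄ ≤ t := by omega
  have hTt : T (t + 1) = i := by rw [← hteq]; exact hs'2
  have hdt : d t = d t₄ := hconst t ht4
  have hdt1 : d (t + 1) = d t₄ := hconst (t + 1) (by omega)
  obtain ⟨c, hc⟩ : ∃ c, gu (Function.update (d t₄) i c) i = g := by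
    rcases hg with ⟨j, hj, rfl⟩ | rfl | rfl
    · by_cases hji : j = i
      · subst hji; exact ⟨some j, gu_update_self j⟩
      · exact ⟨some j, gu_update_guru hj hji⟩
    · exact ⟨none, gu_update_none i⟩
    · exact ⟨some i, gu_update_self i⟩
  have hbp := br_pref hBR t c
  rw [hTt, hdt, hdt1, hc] at hbp
  exact hbp hne
end

section
/- There exist a symmetrical preference profile on 3 voters, a best-response permutation dynamics on it, starting from the delegation function where every voter votes, that reaches a Nash-stable delegation function only at the end of the third round and not earlier; hence the bound of 3 rounds in the convergence theorem for symmetrical profiles is tight. In particular, one may take a profile where voter 1 prefers 2 then herself, voter 3 prefers 2 then herself, voter 2 prefers 1, then 3, then herself, with token order 1,2,3, 2,3,1, 1,3,2. -/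
/-!
Voters are `0, 1, 2`; `0` and `2` accept only `1`, who accepts both and prefers `0`.
Voter `0` moves first and delegates to `1`. Voter `1` would like `0` as guru, but delegating
to `0` now closes a cycle, so she settles for `2`. This routes `0` to `2`, whom she ranks last,
and in the second round she returns to voting herself. Only in the third round, with `0` a guru
again, can `1` obtain `0`; each earlier delegation function leaves someone a profitable deviation.
From step `9` on the dynamics stays put, because the guru of a delegation `update d i c` is
always a guru of `d` or `i` itself, so a Nash-stable delegation function is its own best response.
-/

namespace LD

variable {V : Type*}

theorem guIter_eq_none_or_mem_gurus [DecidableEq V] (d : V → Option V) (k : ℕ) (i : V) :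
    guIter d k i = none ∨ ∃ g ∈ Gurus d, guIter d k i = some g := by
  induction k generalizing i with
  | zero => exact Or.inl rfl
  | succ k ih =>
    unfold guIter
    split
    · exact Or.inl rfl
    · rename_i j hj
      split_ifs with hji
      · exact Or.inr ⟨i, by simpa [Gurus, hji] using hj, rfl⟩
      · exact ih j

section Finite

variable [DecidableEq V] [Fintype V]

theorem gu_update_eq_none_or_self_or_mem_gurus (d : V → Option V) (i : V) (c : Option V) :
    gu (Function.update d i c) i = none ∨ gu (Function.update d i c) i = some i ∨
      ∃ g ∈ Gurus d, gu (Function.update d i c) i = some g := by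
  rcases guIter_eq_none_or_mem_gurus (Function.update d i c) (Fintype.card V + 1) i with
    h | ⟨g, hg, h⟩
  · exact Or.inl h
  · by_cases hgi : g = i
    · exact Or.inr (Or.inl (hgi ▸ h))
    · refine Or.inr (Or.inr ⟨g, ?_, h⟩)
      simpa [Gurus, Function.update_of_ne hgi] using hg

theorem NashStable.bestResponse_self {pref : V → Option V → Option V → Prop}
    {d : V → Option V} (hd : NashStable pref d) (i : V) : BestResponse pref d i d := by
  refine ⟨fun _ _ => rfl, fun c hne => hd i _ ?_ hne, fun _ => rfl⟩
  rcases gu_update_eq_none_or_self_or_mem_gurus d i c with h | h | ⟨g, hg, h⟩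
  · exact Or.inr (Or.inl h)
  · exact Or.inr (Or.inr h)
  · exact Or.inl ⟨g, hg, h⟩

end Finite

theorem InfOften.of_periodic {T : ℕ → V} {p : ℕ} (hT : Function.Periodic T p) (hp : 0 < p)
    (hsurj : Function.Surjective T) : InfOften T := by
  intro i t
  obtain ⟨t₀, rfl⟩ := hsurj i
  refine ⟨t₀ + (t + 1) * p, by nlinarith, hT.nat_mul (t + 1) t₀⟩

theorem covers_iff (T : ℕ → V) (a b : ℕ) :
    Covers T a b ↔ ∀ i, ∃ t ∈ Finset.Icc a b, T t = i := by
  simp only [Covers, Finset.mem_Icc, and_assoc]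

section Decidable

variable [DecidableEq V] [Fintype V]

instance (T : ℕ → V) (a b : ℕ) : Decidable (Covers T a b) :=
  decidable_of_iff _ (covers_iff T a b).symm

variable (pref : V → Option V → Option V → Prop) [∀ i, DecidableRel (pref i)]

instance (i j : V) : Decidable (Acc pref i j) :=
  inferInstanceAs (Decidable (_ ∧ _))

instance (d : V → Option V) : Decidable (NashStable pref d) :=
  inferInstanceAs (Decidable (∀ _ g, ((∃ j, d j = some j ∧ g = some j) ∨ _) → _))

instance (dprev : V → Option V) (i : V) (dnext : V → Option V) :
    Decidable (BestResponse pref dprev i dnext) :=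
  inferInstanceAs (Decidable (_ ∧ _))

end Decidable

end LD

namespace LD.TightExample

def ranking : Fin 3 → List (Option (Fin 3)) :=
  ![[some 1, some 0, none, some 2],
    [some 0, some 2, some 1, none],
    [some 1, some 2, none, some 0]]

def pref (i : Fin 3) : Option (Fin 3) → Option (Fin 3) → Prop :=
  Function.onFun (· < ·) (ranking i).idxOf

instance (i : Fin 3) : DecidableRel (pref i) := fun a b =>
  inferInstanceAs (Decidable ((ranking i).idxOf a < (ranking i).idxOf b))

theorem isProfile_pref : IsProfile pref := fun i =>
  (show Function.Injective (ranking i).idxOf by revert i; decide).isStrictTotalOrder_onFun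
    (r := (· < · : ℕ → ℕ → Prop))

/-- Steps `1, …, 9` hand the token to `0 1 2 | 1 2 0 | 0 2 1`; the order then repeats. -/
def token (t : ℕ) : Fin 3 :=
  ![1, 0, 1, 2, 1, 2, 0, 0, 2] ⟨t % 9, Nat.mod_lt t (by norm_num)⟩

theorem token_periodic : Function.Periodic token 9 := fun t => by
  simp [token]

theorem infOften_token : InfOften token :=
  InfOften.of_periodic token_periodic (by norm_num) fun i => by
    fin_cases i
    exacts [⟨1, rfl⟩, ⟨2, rfl⟩, ⟨3, rfl⟩]

def delegation : ℕ → Fin 3 → Option (Fin 3)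
  | 0 => fun i => some i
  | 1 => ![some 1, some 1, some 2]
  | 2 | 3 | 4 | 5 => ![some 1, some 2, some 2]
  | 6 | 7 | 8 => ![some 0, some 2, some 2]
  | _ => ![some 0, some 0, some 2]

theorem delegation_of_le {t : ℕ} (ht : 9 ≤ t) : delegation t = delegation 9 := by
  obtain ⟨n, rfl⟩ := Nat.exists_eq_add_of_le' ht
  rfl

theorem nashStable_delegation_nine : NashStable pref (delegation 9) := by
  decide

theorem bestResponse_delegation (t : ℕ) :
    BestResponse pref (delegation t) (token (t + 1)) (delegation (t + 1)) := by
  rcases lt_or_ge t 9 with ht | ht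
  · interval_cases t <;> decide
  · rw [delegation_of_le ht, delegation_of_le (by omega : 9 ≤ t + 1)]
    exact nashStable_delegation_nine.bestResponse_self _

end LD.TightExample

open LD in
/-- the 3-round bound for BRD on symmetrical profiles is tight.
There exist a symmetrical preference profile on 3 voters — one may take
`Acc 0 = {1}`, `Acc 2 = {1}`, `Acc 1 = {0, 2}` with voter `1` preferring `0` to
`2` and every voter preferring to vote rather than to abstain (voters `1,2,3`
of the paper are `0,1,2` here) — and a best-response dynamics on it, starting
from the delegation function in which every voter votes, whose token function
gives the token to each voter exactly once in each of the blocks `[1,3]`,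
`[4,6]`, `[7,9]` (so that the rounds end at steps `3`, `6` and `9`), such that
the delegation function reached at the end of the third round (step `9`) is
Nash-stable while none of the earlier delegation functions is. -/
theorem symmetric_brd_three_rounds_tight :
    ∃ pref : Fin 3 → Option (Fin 3) → Option (Fin 3) → Prop,
      IsProfile pref ∧
      (∀ i j : Fin 3, Acc pref i j ↔ Acc pref j i) ∧
      (∀ j : Fin 3,
        (Acc pref 0 j ↔ j = 1) ∧ (Acc pref 2 j ↔ j = 1) ∧
        (Acc pref 1 j ↔ (j = 0 ∨ j = 2))) ∧
      pref 1 (some 0) (some 2) ∧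
      (∀ i : Fin 3, pref i (some i) none) ∧
      ∃ T : ℕ → Fin 3, InfOften T ∧
        (∀ k : ℕ, k < 3 → Covers T (3 * k + 1) (3 * k + 3)) ∧
        ∃ d : ℕ → Fin 3 → Option (Fin 3),
          (∀ i : Fin 3, d 0 i = some i) ∧
          (∀ t : ℕ, BestResponse pref (d t) (T (t + 1)) (d (t + 1))) ∧
          NashStable pref (d 9) ∧ (∀ t : ℕ, t < 9 → ¬ NashStable pref (d t)) := by
  open TightExample in
  exact ⟨pref, isProfile_pref, by decide, by decide, by decide, by decide,
    token, infOften_token, by decide,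
    delegation, fun _ => rfl, bestResponse_delegation, nashStable_delegation_nine, by decide⟩
end
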